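/- arXiv:2303.02853 — 5 statements merged into one kernel-verified Lean document; each statement's English description precedes it below -/
import Mathlib

section
/- (Rule of Column Sums) Let A and B be the z-matrix and w-matrix of a singular sequence, and let E = (e_{ij}) be either A or B. Then for every j ∈ {1,…,n} the column sum Σ_{i=1}^n e_{ij} is not equal to 1, and the column sums of E are not all equal to 0 (equivalently, E is not the zero matrix). -/
open Filter Finset

/-- `Zq δ z k l` is the quantity `Z_{lk} = δ_{kl}^3 · (z_k − z_l)`
(and, applied to `w`, the quantity `W_{lk}`). -/
noncomputable def Zq {n : ℕ} (δ : Fin n → Fin n → ℂ) (z : Fin n → ℂ) (k l : Fin n) : ℂ :=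
  δ k l ^ 3 * (z k - z l)

/-- A singular sequence of normalized central configurations for the masses `m`:
sequences `z^{(N)}, w^{(N)} ∈ ℂ^n`, symmetric `δ^{(N)}`, and positive reals `ε_N → 0`
such that every term satisfies the central configuration equations
`z_k = ∑_{l≠k} m_l Z_{lk}`, `w_k = ∑_{l≠k} m_l W_{lk}`, the normalization
`δ_{kl}^2 z_{kl} w_{kl} = 1` (`k ≠ l`), the maximum of the `|z_k|, |Z_{kl}|`
(resp. `|w_k|, |W_{kl}|`) equals `ε_N^{-2}`, and all the sequences
`ε_N^2 z_k, ε_N^2 w_k, ε_N^2 Z_{kl}, ε_N^2 W_{kl}` converge. -/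
structure SingularSeq (n : ℕ) (m : Fin n → ℂ) : Type where
  z : ℕ → Fin n → ℂ
  w : ℕ → Fin n → ℂ
  delta : ℕ → Fin n → Fin n → ℂ
  eps : ℕ → ℝ
  eps_pos : ∀ N, 0 < eps N
  eps_lim : Tendsto eps atTop (nhds 0)
  delta_symm : ∀ N, ∀ k l : Fin n, delta N k l = delta N l k
  eq_z : ∀ N, ∀ k : Fin n, z N k = ∑ l ∈ univ.erase k, m l * Zq (delta N) (z N) k l
  eq_w : ∀ N, ∀ k : Fin n, w N k = ∑ l ∈ univ.erase k, m l * Zq (delta N) (w N) k l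
  normalize : ∀ N, ∀ k l : Fin n, k ≠ l →
    delta N k l ^ 2 * (z N l - z N k) * (w N l - w N k) = 1
  maxZ : ∀ N, IsGreatest
      ({x : ℝ | ∃ k, x = ‖z N k‖} ∪
        {x : ℝ | ∃ k l, k ≠ l ∧ x = ‖Zq (delta N) (z N) k l‖})
      (eps N ^ (-2 : ℤ))
  maxW : ∀ N, IsGreatest
      ({x : ℝ | ∃ k, x = ‖w N k‖} ∪
        {x : ℝ | ∃ k l, k ≠ l ∧ x = ‖Zq (delta N) (w N) k l‖})
      (eps N ^ (-2 : ℤ))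
  conv_z : ∀ k : Fin n, ∃ L : ℂ,
    Tendsto (fun N => (eps N : ℂ) ^ 2 * z N k) atTop (nhds L)
  conv_w : ∀ k : Fin n, ∃ L : ℂ,
    Tendsto (fun N => (eps N : ℂ) ^ 2 * w N k) atTop (nhds L)
  conv_Z : ∀ k l : Fin n, k ≠ l → ∃ L : ℂ,
    Tendsto (fun N => (eps N : ℂ) ^ 2 * Zq (delta N) (z N) k l) atTop (nhds L)
  conv_W : ∀ k l : Fin n, k ≠ l → ∃ L : ℂ,
    Tendsto (fun N => (eps N : ℂ) ^ 2 * Zq (delta N) (w N) k l) atTop (nhds L)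

/-- `A` and `B` are the z-matrix and the w-matrix of the singular sequence `S`:
symmetric `{0,1}`-matrices whose entries record which of the (convergent) sequences
`ε_N^2 z_i`, `ε_N^2 Z_{ij}` (resp. `ε_N^2 w_i`, `ε_N^2 W_{ij}`) have nonzero limit. -/
structure IsZWMatrices {n : ℕ} {m : Fin n → ℂ} (S : SingularSeq n m)
    (A B : Matrix (Fin n) (Fin n) ℕ) : Prop where
  zeroOne_A : ∀ i j, A i j = 0 ∨ A i j = 1
  symm_A : ∀ i j, A i j = A j i
  zeroOne_B : ∀ i j, B i j = 0 ∨ B i j = 1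
  symm_B : ∀ i j, B i j = B j i
  diag_A : ∀ i, A i i = 1 ↔
    ¬ Tendsto (fun N => (S.eps N : ℂ) ^ 2 * S.z N i) atTop (nhds 0)
  off_A : ∀ i j, i ≠ j → (A i j = 1 ↔
    ¬ Tendsto (fun N => (S.eps N : ℂ) ^ 2 * Zq (S.delta N) (S.z N) i j) atTop (nhds 0))
  diag_B : ∀ i, B i i = 1 ↔
    ¬ Tendsto (fun N => (S.eps N : ℂ) ^ 2 * S.w N i) atTop (nhds 0)
  off_B : ∀ i j, i ≠ j → (B i j = 1 ↔
    ¬ Tendsto (fun N => (S.eps N : ℂ) ^ 2 * Zq (S.delta N) (S.w N) i j) atTop (nhds 0))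

/-!
Let `x` stand for `z` or `w`. The maximum `ε^{-2}` is attained, for infinitely many terms, by one
and the same quantity `|x_k|` or `|X_{kl}|`; after rescaling by `ε^2` that quantity has modulus `1`
infinitely often, so its limit is nonzero and the matrix is not zero. For the column sums, pass to
the limit in the rescaled equation `ε^2 x_j = ∑_{l ≠ j} m_l ε^2 X_{jl}`: by symmetry, column `j`
of the matrix is the support of the limit row `(lim ε^2 x_j, lim ε^2 X_{jl})`, and an identity
`v_j = ∑_{l ≠ j} m_l v_l` with all `m_l ≠ 0` cannot have exactly one nonzero term. Exchanging `z`
and `w` gives a singular sequence whose z-matrix is `B`.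
-/

open Topology

theorem tendsto_nhds_iff_eq_of_tendsto {α X : Type*} [TopologicalSpace X] [T2Space X]
    {l : Filter α} [l.NeBot] {f : α → X} {a b : X} (h : Tendsto f l (𝓝 a)) :
    Tendsto f l (𝓝 b) ↔ a = b :=
  ⟨tendsto_nhds_unique h, fun hab => hab ▸ h⟩

theorem not_tendsto_zero_of_frequently_norm_eq_zpow {α : Type*} {l : Filter α} {ε : α → ℝ}
    {x : α → ℂ} (hε : ∀ a, 0 < ε a) (h : ∃ᶠ a in l, ‖x a‖ = ε a ^ (-2 : ℤ)) :
    ¬ Tendsto (fun a => (ε a : ℂ) ^ 2 * x a) l (𝓝 0) := by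
  intro h0
  have hsmall : ∀ᶠ a in l, ‖(ε a : ℂ) ^ 2 * x a‖ < 1 := by
    simpa using h0.norm.eventually (gt_mem_nhds (by norm_num : ‖(0 : ℂ)‖ < 1))
  obtain ⟨a, hx, hlt⟩ := (h.and_eventually hsmall).exists
  rw [norm_mul, norm_pow, Complex.norm_real, Real.norm_of_nonneg (hε a).le, hx] at hlt
  simp [(hε a).ne'] at hlt

theorem card_support_ne_one_of_eq_sum {ι R : Type*} [Fintype ι] [DecidableEq ι] [Semiring R]
    [DecidableEq R] [NoZeroDivisors R] {c v : ι → R} (hc : ∀ i, c i ≠ 0) {j : ι}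
    (hv : v j = ∑ l ∈ univ.erase j, c l * v l) :
    #{i | v i ≠ 0} ≠ 1 := by
  intro h
  obtain ⟨a, ha⟩ := card_eq_one.mp h
  have hsupp : ∀ i, v i ≠ 0 ↔ i = a := fun i => by
    simpa using congrArg (i ∈ ·) ha
  have hva : v a ≠ 0 := (hsupp a).2 rfl
  have hzero : ∀ i, i ≠ a → c i * v i = 0 := fun i hi => by
    rw [not_ne_iff.mp (mt (hsupp i).1 hi), mul_zero]
  rcases eq_or_ne a j with rfl | haj
  · exact hva (hv.trans (sum_eq_zero fun l hl => hzero l (ne_of_mem_erase hl)))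
  · have hvj : v j = 0 := not_ne_iff.mp (mt (hsupp j).1 haj.symm)
    rw [sum_eq_single_of_mem a (mem_erase.2 ⟨haj, mem_univ a⟩) fun l _ => hzero l, hvj] at hv
    exact mul_ne_zero (hc a) hva hv.symm

namespace SingularSeq

variable {n : ℕ} {m : Fin n → ℂ}

def swap (S : SingularSeq n m) : SingularSeq n m where
  z := S.w
  w := S.z
  delta := S.delta
  eps := S.eps
  eps_pos := S.eps_pos
  eps_lim := S.eps_lim
  delta_symm := S.delta_symm
  eq_z := S.eq_w
  eq_w := S.eq_z
  normalize N k l hkl := by rw [mul_right_comm]; exact S.normalize N k l hkl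
  maxZ := S.maxW
  maxW := S.maxZ
  conv_z := S.conv_w
  conv_w := S.conv_z
  conv_Z := S.conv_W
  conv_W := S.conv_Z

theorem limit_eq_sum_of_tendsto (S : SingularSeq n m) {j : Fin n} {L : ℂ} {v : Fin n → ℂ}
    (hL : Tendsto (fun N => (S.eps N : ℂ) ^ 2 * S.z N j) atTop (𝓝 L))
    (hv : ∀ l, l ≠ j →
      Tendsto (fun N => (S.eps N : ℂ) ^ 2 * Zq (S.delta N) (S.z N) j l) atTop (𝓝 (v l))) :
    L = ∑ l ∈ univ.erase j, m l * v l := by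
  refine tendsto_nhds_unique hL ((tendsto_finsetSum (univ.erase j) fun l hl =>
    (hv l (ne_of_mem_erase hl)).const_mul (m l)).congr fun N => ?_)
  rw [S.eq_z N j, mul_sum]
  exact sum_congr rfl fun l _ => by ring

theorem exists_frequently_norm_eq_eps_zpow (S : SingularSeq n m) :
    (∃ k, ∃ᶠ N in atTop, ‖S.z N k‖ = S.eps N ^ (-2 : ℤ)) ∨
      ∃ k l, k ≠ l ∧ ∃ᶠ N in atTop, ‖Zq (S.delta N) (S.z N) k l‖ = S.eps N ^ (-2 : ℤ) := by
  have h : ∃ᶠ N in atTop, (∃ k, ‖S.z N k‖ = S.eps N ^ (-2 : ℤ)) ∨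
      ∃ k l, k ≠ l ∧ ‖Zq (S.delta N) (S.z N) k l‖ = S.eps N ^ (-2 : ℤ) :=
    Frequently.of_forall fun N => by simpa [eq_comm] using (S.maxZ N).1
  simpa only [frequently_or_distrib, frequently_exists, frequently_and_distrib_left] using h

end SingularSeq

namespace IsZWMatrices

variable {n : ℕ} {m : Fin n → ℂ} {S : SingularSeq n m} {A B : Matrix (Fin n) (Fin n) ℕ}

theorem swap (h : IsZWMatrices S A B) : IsZWMatrices S.swap B A :=
  ⟨h.zeroOne_B, h.symm_B, h.zeroOne_A, h.symm_A, h.diag_B, h.off_B, h.diag_A, h.off_A⟩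

theorem exists_eq_one (h : IsZWMatrices S A B) : ∃ i j, A i j = 1 := by
  rcases S.exists_frequently_norm_eq_eps_zpow with ⟨k, hk⟩ | ⟨k, l, hkl, hkl'⟩
  · exact ⟨k, k, (h.diag_A k).2 (not_tendsto_zero_of_frequently_norm_eq_zpow S.eps_pos hk)⟩
  · exact ⟨k, l, (h.off_A k l hkl).2 (not_tendsto_zero_of_frequently_norm_eq_zpow S.eps_pos hkl')⟩

theorem not_forall_colSum_eq_zero (h : IsZWMatrices S A B) : ¬ ∀ j, ∑ i, A i j = 0 := by
  obtain ⟨i, j, hij⟩ := h.exists_eq_one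
  intro h0
  simpa [hij] using (sum_eq_zero_iff.mp (h0 j)) i (mem_univ i)

theorem exists_row_limit (h : IsZWMatrices S A B) (j : Fin n) :
    ∃ v : Fin n → ℂ, v j = ∑ l ∈ univ.erase j, m l * v l ∧ ∀ i, A j i = 1 ↔ v i ≠ 0 := by
  obtain ⟨L, hL⟩ := S.conv_z j
  have hlim : ∀ l, ∃ L' : ℂ, l ≠ j →
      Tendsto (fun N => (S.eps N : ℂ) ^ 2 * Zq (S.delta N) (S.z N) j l) atTop (𝓝 L') := fun l =>
    if hl : l = j then ⟨0, (absurd hl ·)⟩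
    else (S.conv_Z j l (Ne.symm hl)).imp fun _ hL' _ => hL'
  choose v hv using hlim
  refine ⟨Function.update v j L, ?_, fun i => ?_⟩
  · rw [Function.update_self, S.limit_eq_sum_of_tendsto hL hv]
    exact sum_congr rfl fun l hl => by rw [Function.update_of_ne (ne_of_mem_erase hl)]
  · rcases eq_or_ne i j with rfl | hij
    · rw [Function.update_self, h.diag_A, tendsto_nhds_iff_eq_of_tendsto hL]
    · rw [Function.update_of_ne hij, h.off_A j i hij.symm,
        tendsto_nhds_iff_eq_of_tendsto (hv i hij)]

theorem colSum_ne_one (hm : ∀ i, m i ≠ 0) (h : IsZWMatrices S A B) (j : Fin n) :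
    ∑ i, A i j ≠ 1 := by
  obtain ⟨v, hv, hAv⟩ := h.exists_row_limit j
  have hcol : ∑ i, A i j = #{i | v i ≠ 0} := by
    rw [card_filter]
    refine sum_congr rfl fun i _ => ?_
    rw [h.symm_A]
    rcases h.zeroOne_A j i with h0 | h1
    · simp [h0, ← hAv]
    · simp [h1, (hAv i).1 h1]
  exact hcol ▸ card_support_ne_one_of_eq_sum hm hv

end IsZWMatrices

theorem rule_of_column_sums_general (n : ℕ) (m : Fin n → ℂ)
    (hm : ∀ I : Finset (Fin n), I.Nonempty → ∑ k ∈ I, m k ≠ 0)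
    (S : SingularSeq n m) (A B : Matrix (Fin n) (Fin n) ℕ)
    (hAB : IsZWMatrices S A B) :
    ((∀ j, (∑ i, A i j) ≠ 1) ∧ ¬ (∀ j, (∑ i, A i j) = 0)) ∧
    ((∀ j, (∑ i, B i j) ≠ 1) ∧ ¬ (∀ j, (∑ i, B i j) = 0)) := by
  have hm₁ : ∀ i, m i ≠ 0 := fun i => by simpa using hm {i} (singleton_nonempty i)
  exact ⟨⟨hAB.colSum_ne_one hm₁, hAB.not_forall_colSum_eq_zero⟩,
    ⟨hAB.swap.colSum_ne_one hm₁, hAB.swap.not_forall_colSum_eq_zero⟩⟩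

theorem rule_of_column_sums (n : ℕ) (hn : 2 ≤ n) (m : Fin n → ℂ)
    (hm : ∀ I : Finset (Fin n), I.Nonempty → ∑ k ∈ I, m k ≠ 0)
    (S : SingularSeq n m) (A B : Matrix (Fin n) (Fin n) ℕ)
    (hAB : IsZWMatrices S A B) :
    ((∀ j, (∑ i, A i j) ≠ 1) ∧ ¬ (∀ j, (∑ i, A i j) = 0)) ∧
    ((∀ j, (∑ i, B i j) ≠ 1) ∧ ¬ (∀ j, (∑ i, B i j) = 0)) :=
  rule_of_column_sums_general n m hm S A B hAB
end

section
/- (First Rule of Trace) Let A and B be the z-matrix and w-matrix of a singular sequence. Then the trace of A is not equal to 1, and the trace of B is not equal to 1. -/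
open Filter Finset

/-!
Summing the central configuration equations against the masses gives `∑ m_k z_k = 0`, since
`∑_{k,l} m_k m_l δ_{kl}^3 (z_k − z_l)` is antisymmetric in `(k, l)`. Scaling by `ε^2` and passing to
the limit, the limits `ζ_k` of `ε^2 z_k` satisfy `∑ m_k ζ_k = 0`. A trace equal to one means that
exactly one `ζ_i` is nonzero, and then `m_i ζ_i = 0` with `m_i ≠ 0`.
-/

open Topology

lemma sum_mul_eq_zero_of_eq_sum_mul_Zq {n : ℕ} {m z : Fin n → ℂ} {δ : Fin n → Fin n → ℂ}
    (hδ : ∀ k l, δ k l = δ l k) (hz : ∀ k, z k = ∑ l ∈ univ.erase k, m l * Zq δ z k l) :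
    ∑ k, m k * z k = 0 := by
  set f : Fin n → Fin n → ℂ := fun k l => m k * (m l * Zq δ z k l)
  have hf : ∑ k, m k * z k = ∑ k, ∑ l, f k l := sum_congr rfl fun k _ => by
    rw [hz k, mul_sum, sum_erase _ (by simp [Zq])]
  have hanti : ∑ k, ∑ l, f k l = -∑ k, ∑ l, f k l :=
    calc ∑ k, ∑ l, f k l = ∑ l, ∑ k, f k l := sum_comm
      _ = ∑ l, ∑ k, -f l k := sum_congr rfl fun l _ => sum_congr rfl fun k _ => by
          simp only [f, Zq, hδ l k]; ring
      _ = -∑ l, ∑ k, f l k := by simp only [sum_neg_distrib]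
  rw [hf]
  exact self_eq_neg.mp hanti

lemma sum_mul_eq_zero_of_tendsto {ι α R : Type*} [Fintype ι] [Semiring R] [TopologicalSpace R]
    [IsTopologicalSemiring R] [T2Space R] {l : Filter α} [l.NeBot] {x : α → ι → R} {L : ι → R}
    {m : ι → R} (hx0 : ∀ a, ∑ k, m k * x a k = 0) (hx : ∀ k, Tendsto (x · k) l (𝓝 (L k))) :
    ∑ k, m k * L k = 0 :=
  tendsto_nhds_unique (tendsto_finsetSum _ fun k _ => (hx k).const_mul (m k)) (by simp [hx0])

lemma exists_eq_one_and_eq_zero_of_sum_eq_one {ι : Type*} [Fintype ι] {d : ι → ℕ}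
    (hd : ∑ i, d i = 1) : ∃ i, d i = 1 ∧ ∀ j ≠ i, d j = 0 := by
  classical
  obtain ⟨i, -, hi⟩ := exists_ne_zero_of_sum_ne_zero (hd ▸ one_ne_zero)
  have hsplit := add_sum_erase univ d (mem_univ i)
  refine ⟨i, by omega, fun j hj => ?_⟩
  exact sum_eq_zero_iff.mp (by omega) j (mem_erase.mpr ⟨hj, mem_univ j⟩)

lemma sum_ne_one_of_sum_mul_eq_zero {ι α R : Type*} [Fintype ι] [Ring R] [NoZeroDivisors R]
    [TopologicalSpace R] [IsTopologicalRing R] [T2Space R] {l : Filter α} [l.NeBot]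
    {m : ι → R} (hm : ∀ i, m i ≠ 0) {x : α → ι → R} (hx0 : ∀ a, ∑ k, m k * x a k = 0)
    (hx : ∀ k, ∃ L, Tendsto (x · k) l (𝓝 L)) {d : ι → ℕ}
    (hd : ∀ i, d i = 1 ↔ ¬Tendsto (x · i) l (𝓝 0)) :
    ∑ i, d i ≠ 1 := by
  intro hsum
  choose L hL using hx
  obtain ⟨i, hdi, hdj⟩ := exists_eq_one_and_eq_zero_of_sum_eq_one hsum
  have hLj : ∀ j ≠ i, L j = 0 := fun j hj =>
    tendsto_nhds_unique (hL j) (not_not.mp fun h => by simpa [hdj j hj] using (hd j).mpr h)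
  have hLi : m i * L i = 0 := by
    rw [← sum_mul_eq_zero_of_tendsto hx0 hL, sum_eq_single i (fun j _ hj => by simp [hLj j hj])
      (by simp)]
  exact (hd i).mp hdi (((mul_eq_zero.mp hLi).resolve_left (hm i)) ▸ hL i)

lemma sum_ne_one_of_eq_sum_mul_Zq {n : ℕ} {m : Fin n → ℂ} (hm : ∀ i, m i ≠ 0)
    {δ : ℕ → Fin n → Fin n → ℂ} {z : ℕ → Fin n → ℂ} {eps : ℕ → ℝ}
    (hδ : ∀ N k l, δ N k l = δ N l k)
    (hz : ∀ N k, z N k = ∑ l ∈ univ.erase k, m l * Zq (δ N) (z N) k l)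
    (hconv : ∀ k, ∃ L, Tendsto (fun N => (eps N : ℂ) ^ 2 * z N k) atTop (𝓝 L)) {d : Fin n → ℕ}
    (hd : ∀ i, d i = 1 ↔ ¬Tendsto (fun N => (eps N : ℂ) ^ 2 * z N i) atTop (𝓝 0)) :
    ∑ i, d i ≠ 1 := by
  refine sum_ne_one_of_sum_mul_eq_zero hm (fun N => ?_) hconv hd
  simp_rw [mul_left_comm _ ((eps N : ℂ) ^ 2), ← mul_sum,
    sum_mul_eq_zero_of_eq_sum_mul_Zq (hδ N) (hz N), mul_zero]

theorem first_rule_of_trace_general (n : ℕ) (m : Fin n → ℂ)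
    (hm : ∀ I : Finset (Fin n), I.Nonempty → ∑ k ∈ I, m k ≠ 0)
    (S : SingularSeq n m) (A B : Matrix (Fin n) (Fin n) ℕ)
    (hAB : IsZWMatrices S A B) :
    Matrix.trace A ≠ 1 ∧ Matrix.trace B ≠ 1 := by
  have hm₀ : ∀ i, m i ≠ 0 := fun i => by simpa using hm {i} (singleton_nonempty i)
  exact ⟨sum_ne_one_of_eq_sum_mul_Zq hm₀ S.delta_symm S.eq_z S.conv_z hAB.diag_A,
    sum_ne_one_of_eq_sum_mul_Zq hm₀ S.delta_symm S.eq_w S.conv_w hAB.diag_B⟩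

theorem first_rule_of_trace (n : ℕ) (hn : 2 ≤ n) (m : Fin n → ℂ)
    (hm : ∀ I : Finset (Fin n), I.Nonempty → ∑ k ∈ I, m k ≠ 0)
    (S : SingularSeq n m) (A B : Matrix (Fin n) (Fin n) ℕ)
    (hAB : IsZWMatrices S A B) :
    Matrix.trace A ≠ 1 ∧ Matrix.trace B ≠ 1 :=
  first_rule_of_trace_general n m hm S A B hAB
end

section
/- (Second Rule of Trace-2 Matrices) Let A and B be the z-matrix and w-matrix of a singular sequence. Assume the trace of A equals 2, a_{ii} = a_{jj} = 1 for some i ≠ j, and a_{kl} = 0 for all k ≠ l with {k,l} ≠ {i,j}. Then b_{ik} = b_{jk} = 0 for every k ∈ {1,…,n}. If moreover m_i^3 + m_j^3 ≠ 0, then the trace of B is not equal to n − 3. The same statement holds with the roles of A and B (and of a and b) interchanged. -/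
open Filter Finset

/-!
Write `ε = ε_N`; all asymptotics are along the sequence. The hypotheses on `A` say that after
rescaling by `ε²` only `z_i`, `z_j` and `Z_ij` survive; the equations then give
`lim ε² z_i = m_j c` and `lim ε² z_j = -m_i c` with `c = lim ε² Z_ij ≠ 0`, so `lim ε² z_i` differs
from every other `lim ε² z_l`. The identities `W_kl² z_kl³ w_kl = 1` and `Z_kl w_kl = W_kl z_kl`
force `lim ε² W_kl = 0` whenever the z-limits of `k` and `l` differ; hence the rows `i` and `j`
of `B` vanish.

If moreover `tr B = n - 3`, exactly one further body `k₀` has `lim ε² w_k₀ = 0`, yet a second one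
has to exist. Indeed, subtracting the equations for `z_i`, `z_j` (and for `w_i`, `w_j`) gives
`z_ij Q = w_ij P`, where `P`, `Q` are the sums of `m_l (Z_il - Z_jl)` and `m_l (W_il - W_jl)` over
`l ∉ {i, j}`. Put `W = W_ik₀` and `V = W_jk₀`. The terms with `l ≠ k₀` are `O(ε⁴)` (their
w-limits do not vanish), `w_ij / z_ij = O(ε⁴)`, and `ε⁴`, `ε⁴ Z_ik₀`, `ε⁴ Z_jk₀` are `o(W)`.
Moreover `(V / W)² → (-m_j / m_i)³ ≠ 1` because `m_i³ + m_j³ ≠ 0`, so `W = O(W - V)`. Altogether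
`W = O(W - V) = O(Q) + o(W) = O(ε⁴ P) + o(W) = o(W)`, which is absurd.
-/

open Asymptotics Topology

section Asymptotics

variable {α 𝕜 : Type*} [NormedField 𝕜] {l : Filter α} {f g r : α → 𝕜}

theorem isBigO_of_pow_eq_mul {k : ℕ} {c : 𝕜} (hk : k ≠ 0) (hr : Tendsto r l (𝓝 c))
    (heq : ∀ᶠ x in l, f x ^ k = g x ^ k * r x) : f =O[l] g :=
  IsBigO.of_pow hk <| ((isBigO_refl (g ^ k) l).mul (hr.isBigO_one 𝕜)).congr'
    (heq.mono fun x hx => by simp [hx]) (Eventually.of_forall fun _ => mul_one _)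

theorem isLittleO_of_pow_eq_mul {k : ℕ} (hk : k ≠ 0) (hr : Tendsto r l (𝓝 0))
    (heq : ∀ᶠ x in l, f x ^ k = g x ^ k * r x) : f =o[l] g :=
  IsLittleO.of_pow (((isBigO_refl (g ^ k) l).mul_isLittleO ((isLittleO_one_iff 𝕜).2 hr)).congr'
    (heq.mono fun x hx => by simp [hx]) (Eventually.of_forall fun _ => mul_one _)) hk

theorem isBigO_of_tendsto_div_sq {U V : α → 𝕜} {τ : 𝕜} (hU : ∀ x, U x ≠ 0)
    (h : Tendsto (fun x => (V x / U x) ^ 2) l (𝓝 τ)) : V =O[l] U := by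
  have hx : (fun x => V x / U x) =O[l] (fun _ => (1 : 𝕜)) :=
    isBigO_of_pow_eq_mul two_ne_zero h (Eventually.of_forall fun x => by ring)
  exact (hx.mul (isBigO_refl U l)).congr (fun x => div_mul_cancel₀ _ (hU x)) (fun x => one_mul _)

theorem isBigO_sub_of_tendsto_div_sq {U V : α → 𝕜} {τ : 𝕜} (hU : ∀ x, U x ≠ 0)
    (h : Tendsto (fun x => (V x / U x) ^ 2) l (𝓝 τ)) (hτ : τ ≠ 1) : U =O[l] (U - V) := by
  have h1 : Tendsto (fun x => 1 - (V x / U x) ^ 2) l (𝓝 (1 - τ)) := tendsto_const_nhds.sub h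
  have hsum : (fun x => 1 + V x / U x) =O[l] (fun _ => (1 : 𝕜)) :=
    (isBigO_const_one 𝕜 1 l).add (isBigO_of_pow_eq_mul two_ne_zero h
      (Eventually.of_forall fun x => by ring))
  have hinv := (h1.inv₀ (sub_ne_zero.2 hτ.symm)).isBigO_one 𝕜
  refine ((isBigO_refl (fun x => U x - V x) l).mul (hsum.mul hinv)).congr' ?_
    (Eventually.of_forall fun _ => by simp)
  filter_upwards [h1.eventually_ne (sub_ne_zero.2 hτ.symm)] with x hx
  have key : (U x - V x) * (1 + V x / U x) = U x * (1 - (V x / U x) ^ 2) := by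
    field_simp [hU x]
    ring
  rw [← mul_assoc, key, mul_assoc, mul_inv_cancel₀ hx, mul_one]

end Asymptotics

theorem Finset.exists_eq_zero_of_sum_add_one_eq_card {ι : Type*} {s : Finset ι} {f : ι → ℕ}
    (hf : ∀ i ∈ s, f i ≤ 1) (h : ∑ i ∈ s, f i + 1 = #s) :
    ∃ k ∈ s, f k = 0 ∧ ∀ l ∈ s, l ≠ k → f l ≠ 0 := by
  classical
  have hcard : #(s.filter (f · = 0)) = 1 := by
    have : ∑ i ∈ s, f i + #(s.filter (f · = 0)) = ∑ i ∈ s, 1 := by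
      rw [card_filter, ← sum_add_distrib]
      exact sum_congr rfl fun i hi => by have := hf i hi; split_ifs <;> omega
    rw [← card_eq_sum_ones] at this
    omega
  obtain ⟨k, hk⟩ := card_eq_one.1 hcard
  have hmem : ∀ l, l ∈ s ∧ f l = 0 ↔ l = k := fun l => by
    simpa using Finset.ext_iff.1 hk l
  exact ⟨k, ((hmem k).2 rfl).1, ((hmem k).2 rfl).2, fun l hl hlk h0 => hlk ((hmem l).1 ⟨hl, h0⟩)⟩

theorem Finset.sum_erase_eq_add_sum_compl_pair {ι M : Type*} [Fintype ι] [DecidableEq ι]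
    [AddCommMonoid M] (f : ι → M) {i j : ι} (hij : i ≠ j) :
    ∑ l ∈ univ.erase i, f l = f j + ∑ l ∈ {i, j}ᶜ, f l := by
  rw [← add_sum_erase _ _ (mem_erase.2 ⟨hij.symm, mem_univ j⟩)]
  congr 2
  ext l
  simp [and_comm]

theorem isBigO_sum_sub_of_mem {ι α E F : Type*} [NormedAddCommGroup E] [Norm F]
    {l : Filter α} {s : Finset ι} {k : ι} [DecidableEq ι] (hk : k ∈ s) {A : ι → α → E}
    {g : α → F} (h : ∀ i ∈ s.erase k, A i =O[l] g) :
    (fun x => ∑ i ∈ s, A i x - A k x) =O[l] g := by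
  simpa only [← add_sum_erase s _ hk, add_sub_cancel_left] using IsBigO.fun_sum h

theorem Zq_comm {n : ℕ} {δ : Fin n → Fin n → ℂ} {k l : Fin n} (hδ : δ l k = δ k l)
    (z : Fin n → ℂ) : Zq δ z l k = -Zq δ z k l := by
  unfold Zq
  rw [hδ]
  ring

theorem sub_mul_eq_sum_compl_pair {n : ℕ} {m : Fin n → ℂ} {δ : Fin n → Fin n → ℂ}
    {z : Fin n → ℂ} {i j : Fin n} (hij : i ≠ j) (hδ : δ j i = δ i j)
    (hz : ∀ k, z k = ∑ l ∈ univ.erase k, m l * Zq δ z k l) :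
    (z i - z j) * (1 - (m i + m j) * δ i j ^ 3) =
      ∑ l ∈ {i, j}ᶜ, m l * (Zq δ z i l - Zq δ z j l) := by
  have hi := hz i
  have hj := hz j
  rw [sum_erase_eq_add_sum_compl_pair _ hij] at hi
  rw [sum_erase_eq_add_sum_compl_pair _ hij.symm, pair_comm, Zq_comm hδ] at hj
  simp only [mul_sub, sum_sub_distrib]
  unfold Zq at hi hj ⊢
  linear_combination hi - hj

noncomputable def SingularSeq.swap_s7 {n : ℕ} {m : Fin n → ℂ} (S : SingularSeq n m) :
    SingularSeq n m where
  z := S.w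
  w := S.z
  delta := S.delta
  eps := S.eps
  eps_pos := S.eps_pos
  eps_lim := S.eps_lim
  delta_symm := S.delta_symm
  eq_z := S.eq_w
  eq_w := S.eq_z
  normalize := fun N k l h => by rw [mul_right_comm]; exact S.normalize N k l h
  maxZ := S.maxW
  maxW := S.maxZ
  conv_z := S.conv_w
  conv_w := S.conv_z
  conv_Z := S.conv_W
  conv_W := S.conv_Z

theorem IsZWMatrices.swap_s7 {n : ℕ} {m : Fin n → ℂ} {S : SingularSeq n m}
    {A B : Matrix (Fin n) (Fin n) ℕ} (h : IsZWMatrices S A B) : IsZWMatrices S.swap_s7 B A where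
  zeroOne_A := h.zeroOne_B
  symm_A := h.symm_B
  zeroOne_B := h.zeroOne_A
  symm_B := h.symm_A
  diag_A := h.diag_B
  off_A := h.off_B
  diag_B := h.diag_A
  off_B := h.off_A

namespace SingularSeq

variable {n : ℕ} {m : Fin n → ℂ} (S : SingularSeq n m) {i j k l : Fin n}

theorem Zq_z_sq_mul (N : ℕ) (hkl : k ≠ l) :
    Zq (S.delta N) (S.z N) k l ^ 2 * ((S.z N k - S.z N l) * (S.w N k - S.w N l) ^ 3) = 1 := by
  calc _ = (S.delta N k l ^ 2 * (S.z N l - S.z N k) * (S.w N l - S.w N k)) ^ 3 := by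
        unfold Zq; ring
    _ = 1 := by rw [S.normalize N k l hkl, one_pow]

theorem Zq_w_sq_mul (N : ℕ) (hkl : k ≠ l) :
    Zq (S.delta N) (S.w N) k l ^ 2 * ((S.z N k - S.z N l) ^ 3 * (S.w N k - S.w N l)) = 1 := by
  rw [mul_comm (_ ^ 3)]
  exact S.swap_s7.Zq_z_sq_mul N hkl

theorem Zq_z_mul_sub_w (N : ℕ) (k l : Fin n) :
    Zq (S.delta N) (S.z N) k l * (S.w N k - S.w N l) =
      Zq (S.delta N) (S.w N) k l * (S.z N k - S.z N l) := by
  unfold Zq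
  ring

theorem sub_z_ne_zero (N : ℕ) (hkl : k ≠ l) : S.z N k - S.z N l ≠ 0 := fun h0 => by
  simpa [h0] using S.Zq_z_sq_mul N hkl

theorem sub_w_ne_zero (N : ℕ) (hkl : k ≠ l) : S.w N k - S.w N l ≠ 0 :=
  S.swap_s7.sub_z_ne_zero N hkl

theorem Zq_z_ne_zero (N : ℕ) (hkl : k ≠ l) : Zq (S.delta N) (S.z N) k l ≠ 0 := fun h0 => by
  simpa [h0] using S.Zq_z_sq_mul N hkl

theorem Zq_w_ne_zero (N : ℕ) (hkl : k ≠ l) : Zq (S.delta N) (S.w N) k l ≠ 0 := fun h0 => by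
  simpa [h0] using S.Zq_w_sq_mul N hkl

theorem sub_z_mul_sum_compl_pair_w (N : ℕ) (hij : i ≠ j) :
    (S.z N i - S.z N j) * ∑ l ∈ {i, j}ᶜ, m l *
        (Zq (S.delta N) (S.w N) i l - Zq (S.delta N) (S.w N) j l) =
      (S.w N i - S.w N j) * ∑ l ∈ {i, j}ᶜ, m l *
        (Zq (S.delta N) (S.z N) i l - Zq (S.delta N) (S.z N) j l) := by
  rw [← sub_mul_eq_sum_compl_pair hij (S.delta_symm N j i) (S.eq_z N),
    ← sub_mul_eq_sum_compl_pair hij (S.delta_symm N j i) (S.eq_w N)]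
  ring

noncomputable def epsSq (N : ℕ) : ℂ := (S.eps N : ℂ) ^ 2

-- `limUnder` is junk on a divergent sequence; the `conv_*` fields of `SingularSeq` exclude this
-- (for `ZLim` and `WLim` only when `k ≠ l`).
noncomputable def zLim (k : Fin n) : ℂ := limUnder atTop fun N => S.epsSq N * S.z N k

noncomputable def wLim (k : Fin n) : ℂ := limUnder atTop fun N => S.epsSq N * S.w N k

noncomputable def ZLim (k l : Fin n) : ℂ :=
  limUnder atTop fun N => S.epsSq N * Zq (S.delta N) (S.z N) k l

noncomputable def WLim (k l : Fin n) : ℂ :=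
  limUnder atTop fun N => S.epsSq N * Zq (S.delta N) (S.w N) k l

theorem epsSq_ne_zero (N : ℕ) : S.epsSq N ≠ 0 :=
  pow_ne_zero 2 (Complex.ofReal_ne_zero.2 (S.eps_pos N).ne')

theorem tendsto_epsSq : Tendsto S.epsSq atTop (𝓝 0) := by
  unfold epsSq
  simpa using ((Complex.continuous_ofReal.tendsto 0).comp S.eps_lim).pow 2

theorem tendsto_zLim (k : Fin n) :
    Tendsto (fun N => S.epsSq N * S.z N k) atTop (𝓝 (S.zLim k)) :=
  tendsto_nhds_limUnder (S.conv_z k)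

theorem tendsto_ZLim (hkl : k ≠ l) :
    Tendsto (fun N => S.epsSq N * Zq (S.delta N) (S.z N) k l) atTop (𝓝 (S.ZLim k l)) :=
  tendsto_nhds_limUnder (S.conv_Z k l hkl)

theorem tendsto_WLim (hkl : k ≠ l) :
    Tendsto (fun N => S.epsSq N * Zq (S.delta N) (S.w N) k l) atTop (𝓝 (S.WLim k l)) :=
  S.swap_s7.tendsto_ZLim hkl

theorem tendsto_sub_z (k l : Fin n) :
    Tendsto (fun N => S.epsSq N * (S.z N k - S.z N l)) atTop (𝓝 (S.zLim k - S.zLim l)) := by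
  simpa only [mul_sub] using (S.tendsto_zLim k).sub (S.tendsto_zLim l)

theorem tendsto_sub_w (k l : Fin n) :
    Tendsto (fun N => S.epsSq N * (S.w N k - S.w N l)) atTop (𝓝 (S.wLim k - S.wLim l)) :=
  S.swap_s7.tendsto_sub_z k l

theorem zLim_eq_sum (k : Fin n) : S.zLim k = ∑ l ∈ univ.erase k, m l * S.ZLim k l := by
  refine tendsto_nhds_unique (S.tendsto_zLim k) ((tendsto_finsetSum _ fun l hl =>
    (S.tendsto_ZLim (ne_of_mem_erase hl).symm).const_mul (m l)).congr fun N => ?_)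
  rw [S.eq_z N k, mul_sum]
  exact sum_congr rfl fun l _ => by ring

theorem wLim_eq_sum (k : Fin n) : S.wLim k = ∑ l ∈ univ.erase k, m l * S.WLim k l :=
  S.swap_s7.zLim_eq_sum k

theorem ZLim_comm (hkl : k ≠ l) : S.ZLim l k = -S.ZLim k l :=
  tendsto_nhds_unique (S.tendsto_ZLim hkl.symm)
    (by simpa [Zq_comm (S.delta_symm _ l k)] using (S.tendsto_ZLim hkl).neg)

theorem WLim_eq_zero_of_zLim_ne (hkl : k ≠ l) (h : S.zLim k ≠ S.zLim l) : S.WLim k l = 0 := by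
  have hprod : S.WLim k l ^ 2 * ((S.zLim k - S.zLim l) ^ 3 * (S.wLim k - S.wLim l)) = 0 := by
    refine tendsto_nhds_unique (((S.tendsto_WLim hkl).pow 2).mul
      (((S.tendsto_sub_z k l).pow 3).mul (S.tendsto_sub_w k l))) ?_
    refine (by simpa using S.tendsto_epsSq.pow 6 : Tendsto (fun N => S.epsSq N ^ 6) _ _).congr
      fun N => ?_
    linear_combination -S.epsSq N ^ 6 * S.Zq_w_sq_mul N hkl
  have hrel : S.ZLim k l * (S.wLim k - S.wLim l) = S.WLim k l * (S.zLim k - S.zLim l) :=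
    tendsto_nhds_unique ((S.tendsto_ZLim hkl).mul (S.tendsto_sub_w k l))
      (((S.tendsto_WLim hkl).mul (S.tendsto_sub_z k l)).congr fun N => by
        linear_combination -S.epsSq N ^ 2 * S.Zq_z_mul_sub_w N k l)
  have hz := sub_ne_zero.2 h
  rcases eq_or_ne (S.wLim k - S.wLim l) 0 with hw | hw
  · rw [hw, mul_zero] at hrel
    exact (mul_eq_zero.1 hrel.symm).resolve_right hz
  · simpa [hz, hw] using hprod

theorem epsSq_isLittleO_sub_w (hkl : k ≠ l) (hZ : S.ZLim k l = 0) :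
    S.epsSq =o[atTop] fun N => S.w N k - S.w N l :=
  isLittleO_of_pow_eq_mul three_ne_zero
    (by simpa [hZ] using ((S.tendsto_ZLim hkl).pow 2).mul (S.tendsto_sub_z k l))
    (Eventually.of_forall fun N => by
      linear_combination -S.epsSq N ^ 3 * S.Zq_z_sq_mul N hkl)

theorem epsSq_sq_mul_Zq_z_isLittleO (hkl : k ≠ l) (hZ : S.ZLim k l = 0) :
    (fun N => S.epsSq N ^ 2 * Zq (S.delta N) (S.z N) k l) =o[atTop]
      fun N => Zq (S.delta N) (S.w N) k l := by
  have hdiv := (isLittleO_iff_tendsto fun N h0 => absurd h0 (S.sub_w_ne_zero N hkl)).1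
    (S.epsSq_isLittleO_sub_w hkl hZ)
  have h := (isLittleO_one_iff ℂ).2 (by simpa using (S.tendsto_sub_z k l).mul hdiv)
  refine (h.mul_isBigO (isBigO_refl (fun N => Zq (S.delta N) (S.w N) k l) atTop)).congr
    (fun N => ?_) fun N => one_mul _
  have := S.sub_w_ne_zero N hkl
  field_simp
  linear_combination -S.epsSq N ^ 2 * S.Zq_z_mul_sub_w N k l

theorem epsSq_sq_isLittleO_Zq_w (hkl : k ≠ l) (hw : S.wLim k = S.wLim l) :
    (fun N => S.epsSq N ^ 2) =o[atTop] fun N => Zq (S.delta N) (S.w N) k l :=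
  isLittleO_of_pow_eq_mul two_ne_zero
    (by simpa [hw] using ((S.tendsto_sub_z k l).pow 3).mul (S.tendsto_sub_w k l))
    (Eventually.of_forall fun N => by
      linear_combination -S.epsSq N ^ 4 * S.Zq_w_sq_mul N hkl)

theorem Zq_z_isBigO (hkl : k ≠ l) (hz : S.zLim k ≠ S.zLim l) (hw : S.wLim k ≠ S.wLim l) :
    (fun N => Zq (S.delta N) (S.z N) k l) =O[atTop] fun N => S.epsSq N ^ 2 :=
  isBigO_of_pow_eq_mul two_ne_zero (((S.tendsto_sub_z k l).mul
      ((S.tendsto_sub_w k l).pow 3)).inv₀ (mul_ne_zero (sub_ne_zero.2 hz)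
      (pow_ne_zero 3 (sub_ne_zero.2 hw))))
    (Eventually.of_forall fun N => by
      have := S.epsSq_ne_zero N
      have := S.sub_z_ne_zero N hkl
      have := S.sub_w_ne_zero N hkl
      field_simp
      linear_combination S.Zq_z_sq_mul N hkl)

theorem Zq_w_isBigO (hkl : k ≠ l) (hz : S.zLim k ≠ S.zLim l) (hw : S.wLim k ≠ S.wLim l) :
    (fun N => Zq (S.delta N) (S.w N) k l) =O[atTop] fun N => S.epsSq N ^ 2 :=
  S.swap_s7.Zq_z_isBigO hkl hw hz

theorem sub_w_isBigO (hkl : k ≠ l) (hZ : S.ZLim k l ≠ 0) (hz : S.zLim k ≠ S.zLim l) :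
    (fun N => S.w N k - S.w N l) =O[atTop] S.epsSq :=
  isBigO_of_pow_eq_mul three_ne_zero ((((S.tendsto_ZLim hkl).pow 2).mul
      (S.tendsto_sub_z k l)).inv₀ (mul_ne_zero (pow_ne_zero 2 hZ) (sub_ne_zero.2 hz)))
    (Eventually.of_forall fun N => by
      have := S.epsSq_ne_zero N
      have := S.sub_z_ne_zero N hkl
      have := S.Zq_z_ne_zero N hkl
      field_simp
      linear_combination S.Zq_z_sq_mul N hkl)

theorem sub_w_div_sub_z_isBigO (hkl : k ≠ l) (hZ : S.ZLim k l ≠ 0)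
    (hz : S.zLim k ≠ S.zLim l) :
    (fun N => (S.w N k - S.w N l) / (S.z N k - S.z N l)) =O[atTop]
      fun N => S.epsSq N ^ 2 :=
  isBigO_of_pow_eq_mul three_ne_zero ((((S.tendsto_ZLim hkl).pow 2).mul
      ((S.tendsto_sub_z k l).pow 4)).inv₀
      (mul_ne_zero (pow_ne_zero 2 hZ) (pow_ne_zero 4 (sub_ne_zero.2 hz))))
    (Eventually.of_forall fun N => by
      have := S.epsSq_ne_zero N
      have := S.sub_z_ne_zero N hkl
      have := S.Zq_z_ne_zero N hkl
      field_simp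
      linear_combination S.Zq_z_sq_mul N hkl)

theorem tendsto_sub_w_div_sub_w (hij : i ≠ j) (hjk : j ≠ k) (hZij : S.ZLim i j ≠ 0)
    (hzij : S.zLim i ≠ S.zLim j) (hZjk : S.ZLim j k = 0) :
    Tendsto (fun N => (S.w N i - S.w N k) / (S.w N j - S.w N k)) atTop (𝓝 1) := by
  have h := (isLittleO_iff_tendsto fun N h0 => absurd h0 (S.sub_w_ne_zero N hjk)).1
    ((S.sub_w_isBigO hij hZij hzij).trans_isLittleO (S.epsSq_isLittleO_sub_w hjk hZjk))
  have h1 : Tendsto (fun N => 1 + (S.w N i - S.w N j) / (S.w N j - S.w N k)) atTop (𝓝 1) := by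
    simpa using h.const_add 1
  refine h1.congr fun N => ?_
  have := S.sub_w_ne_zero N hjk
  field_simp
  ring

theorem tendsto_Zq_w_div_sq (hij : i ≠ j) (hik : i ≠ k) (hjk : j ≠ k) (hZij : S.ZLim i j ≠ 0)
    (hzij : S.zLim i ≠ S.zLim j) (hZjk : S.ZLim j k = 0) (hzjk : S.zLim j ≠ S.zLim k) :
    Tendsto (fun N => (Zq (S.delta N) (S.w N) j k / Zq (S.delta N) (S.w N) i k) ^ 2) atTop
      (𝓝 (((S.zLim i - S.zLim k) / (S.zLim j - S.zLim k)) ^ 3)) := by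
  have h := (((S.tendsto_sub_z i k).div (S.tendsto_sub_z j k) (sub_ne_zero.2 hzjk)).pow 3).mul
    (S.tendsto_sub_w_div_sub_w hij hjk hZij hzij hZjk)
  rw [mul_one] at h
  refine h.congr fun N => ?_
  simp only [Pi.div_apply]
  have := S.epsSq_ne_zero N
  have := S.sub_z_ne_zero N hjk
  have := S.sub_w_ne_zero N hjk
  have := S.Zq_w_ne_zero N hik
  field_simp
  linear_combination S.Zq_w_sq_mul N hik - S.Zq_w_sq_mul N hjk

/-- The limit pattern of a z-matrix with `a_ii = a_jj = 1`, all other diagonal entries `0`, and no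
off-diagonal entries outside `{i, j}`. -/
structure ZSupportedOnPair (i j : Fin n) : Prop where
  ne : i ≠ j
  zLim_eq_zero : ∀ k, k ≠ i → k ≠ j → S.zLim k = 0
  ZLim_eq_zero : ∀ k l, k ≠ l → ¬((k = i ∧ l = j) ∨ (k = j ∧ l = i)) → S.ZLim k l = 0
  zLim_left_ne_zero : S.zLim i ≠ 0
  zLim_right_ne_zero : S.zLim j ≠ 0

namespace ZSupportedOnPair

variable {S} {k₀ : Fin n}

theorem symm (hS : S.ZSupportedOnPair i j) : S.ZSupportedOnPair j i where
  ne := hS.ne.symm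
  zLim_eq_zero k hki hkj := hS.zLim_eq_zero k hkj hki
  ZLim_eq_zero k l hkl h := hS.ZLim_eq_zero k l hkl (by tauto)
  zLim_left_ne_zero := hS.zLim_right_ne_zero
  zLim_right_ne_zero := hS.zLim_left_ne_zero

theorem zLim_left_eq (hS : S.ZSupportedOnPair i j) : S.zLim i = m j * S.ZLim i j := by
  rw [S.zLim_eq_sum, sum_eq_single_of_mem j (mem_erase.2 ⟨hS.ne.symm, mem_univ j⟩)]
  intro l hl hlj
  have := hS.ne
  rw [hS.ZLim_eq_zero i l (ne_of_mem_erase hl).symm (by tauto), mul_zero]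

theorem zLim_right_eq (hS : S.ZSupportedOnPair i j) : S.zLim j = -(m i * S.ZLim i j) := by
  rw [hS.symm.zLim_left_eq, S.ZLim_comm hS.ne, mul_neg]

theorem ZLim_ne_zero (hS : S.ZSupportedOnPair i j) : S.ZLim i j ≠ 0 := fun h =>
  hS.zLim_left_ne_zero (by rw [hS.zLim_left_eq, h, mul_zero])

theorem zLim_left_ne (hS : S.ZSupportedOnPair i j)
    (hm : ∀ I : Finset (Fin n), I.Nonempty → ∑ k ∈ I, m k ≠ 0) (hli : l ≠ i) :
    S.zLim i ≠ S.zLim l := by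
  rcases eq_or_ne l j with rfl | hlj
  · rw [← sub_ne_zero, hS.zLim_left_eq, hS.zLim_right_eq,
      show ∀ a b c : ℂ, a * c - -(b * c) = (b + a) * c from fun _ _ _ => by ring]
    exact mul_ne_zero (by simpa [sum_pair hS.ne] using hm {i, l} (insert_nonempty _ _))
      hS.ZLim_ne_zero
  · rw [hS.zLim_eq_zero l hli hlj]
    exact hS.zLim_left_ne_zero

theorem WLim_left_eq_zero (hS : S.ZSupportedOnPair i j)
    (hm : ∀ I : Finset (Fin n), I.Nonempty → ∑ k ∈ I, m k ≠ 0) (hli : l ≠ i) :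
    S.WLim i l = 0 :=
  S.WLim_eq_zero_of_zLim_ne hli.symm (hS.zLim_left_ne hm hli)

theorem wLim_left_eq_zero (hS : S.ZSupportedOnPair i j)
    (hm : ∀ I : Finset (Fin n), I.Nonempty → ∑ k ∈ I, m k ≠ 0) : S.wLim i = 0 := by
  rw [S.wLim_eq_sum]
  exact sum_eq_zero fun l hl => by rw [hS.WLim_left_eq_zero hm (ne_of_mem_erase hl), mul_zero]

theorem zLim_left_pow_three_ne (hS : S.ZSupportedOnPair i j) (hm3 : m i ^ 3 + m j ^ 3 ≠ 0) :
    S.zLim i ^ 3 ≠ S.zLim j ^ 3 := fun h =>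
  mul_ne_zero (pow_ne_zero 3 hS.ZLim_ne_zero) hm3 <| by
    rw [hS.zLim_left_eq, hS.zLim_right_eq] at h
    linear_combination h

theorem Zq_left_isBigO (hS : S.ZSupportedOnPair i j)
    (hm : ∀ I : Finset (Fin n), I.Nonempty → ∑ k ∈ I, m k ≠ 0) (hli : l ≠ i)
    (hwl : S.wLim l ≠ 0) :
    ((fun N => Zq (S.delta N) (S.z N) i l) =O[atTop] fun N => S.epsSq N ^ 2) ∧
      ((fun N => Zq (S.delta N) (S.w N) i l) =O[atTop] fun N => S.epsSq N ^ 2) := by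
  have hz := hS.zLim_left_ne hm hli
  have hw : S.wLim i ≠ S.wLim l := by rw [hS.wLim_left_eq_zero hm]; exact hwl.symm
  exact ⟨S.Zq_z_isBigO hli.symm hz hw, S.Zq_w_isBigO hli.symm hz hw⟩

theorem sum_compl_pair_sub_isBigO (hS : S.ZSupportedOnPair i j)
    (hm : ∀ I : Finset (Fin n), I.Nonempty → ∑ k ∈ I, m k ≠ 0) (hk₀i : k₀ ≠ i) (hk₀j : k₀ ≠ j)
    (hfar : ∀ l, l ≠ i → l ≠ j → l ≠ k₀ → S.wLim l ≠ 0) :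
    ((fun N => ∑ l ∈ {i, j}ᶜ, m l * (Zq (S.delta N) (S.z N) i l - Zq (S.delta N) (S.z N) j l) -
        m k₀ * (Zq (S.delta N) (S.z N) i k₀ - Zq (S.delta N) (S.z N) j k₀)) =O[atTop]
        fun N => S.epsSq N ^ 2) ∧
      ((fun N => ∑ l ∈ {i, j}ᶜ, m l *
          (Zq (S.delta N) (S.w N) i l - Zq (S.delta N) (S.w N) j l) -
        m k₀ * (Zq (S.delta N) (S.w N) i k₀ - Zq (S.delta N) (S.w N) j k₀)) =O[atTop]
        fun N => S.epsSq N ^ 2) := by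
  have hk₀ : k₀ ∈ ({i, j}ᶜ : Finset (Fin n)) := by simp [hk₀i, hk₀j]
  have hterm : ∀ l ∈ ({i, j}ᶜ : Finset (Fin n)).erase k₀,
      ((fun N => m l * (Zq (S.delta N) (S.z N) i l - Zq (S.delta N) (S.z N) j l)) =O[atTop]
        fun N => S.epsSq N ^ 2) ∧
      ((fun N => m l * (Zq (S.delta N) (S.w N) i l - Zq (S.delta N) (S.w N) j l)) =O[atTop]
        fun N => S.epsSq N ^ 2) := by
    intro l hl
    simp only [mem_erase, mem_compl, mem_insert, mem_singleton, not_or] at hl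
    obtain ⟨hlk₀, hli, hlj⟩ := hl
    have hwl := hfar l hli hlj hlk₀
    obtain ⟨hzi, hwi⟩ := hS.Zq_left_isBigO hm hli hwl
    obtain ⟨hzj, hwj⟩ := hS.symm.Zq_left_isBigO hm hlj hwl
    exact ⟨(hzi.sub hzj).const_mul_left _, (hwi.sub hwj).const_mul_left _⟩
  exact ⟨isBigO_sum_sub_of_mem hk₀ fun l hl => (hterm l hl).1,
    isBigO_sum_sub_of_mem hk₀ fun l hl => (hterm l hl).2⟩

theorem Zq_w_comparable (hS : S.ZSupportedOnPair i j)
    (hm : ∀ I : Finset (Fin n), I.Nonempty → ∑ k ∈ I, m k ≠ 0) (hm3 : m i ^ 3 + m j ^ 3 ≠ 0)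
    (hk₀i : k₀ ≠ i) (hk₀j : k₀ ≠ j) :
    ((fun N => Zq (S.delta N) (S.w N) j k₀) =O[atTop] fun N => Zq (S.delta N) (S.w N) i k₀) ∧
      ((fun N => Zq (S.delta N) (S.w N) i k₀) =O[atTop]
        fun N => Zq (S.delta N) (S.w N) i k₀ - Zq (S.delta N) (S.w N) j k₀) := by
  have hzk₀ := hS.zLim_eq_zero k₀ hk₀i hk₀j
  have hx := S.tendsto_Zq_w_div_sq hS.ne hk₀i.symm hk₀j.symm hS.ZLim_ne_zero
    (hS.zLim_left_ne hm hS.ne.symm) (hS.symm.ZLim_eq_zero j k₀ hk₀j.symm (by tauto))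
    (by rw [hzk₀]; exact hS.zLim_right_ne_zero)
  rw [hzk₀, sub_zero, sub_zero] at hx
  have hτ : (S.zLim i / S.zLim j) ^ 3 ≠ 1 := by
    rw [div_pow, Ne, div_eq_one_iff_eq (pow_ne_zero 3 hS.zLim_right_ne_zero)]
    exact hS.zLim_left_pow_three_ne hm3
  have hW0 := fun N => S.Zq_w_ne_zero N hk₀i.symm
  exact ⟨isBigO_of_tendsto_div_sq hW0 hx, isBigO_sub_of_tendsto_div_sq hW0 hx hτ⟩

theorem exists_ne_wLim_eq_zero (hS : S.ZSupportedOnPair i j)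
    (hm : ∀ I : Finset (Fin n), I.Nonempty → ∑ k ∈ I, m k ≠ 0) (hm3 : m i ^ 3 + m j ^ 3 ≠ 0)
    (hk₀i : k₀ ≠ i) (hk₀j : k₀ ≠ j) (hwk₀ : S.wLim k₀ = 0) :
    ∃ l, l ≠ i ∧ l ≠ j ∧ l ≠ k₀ ∧ S.wLim l = 0 := by
  by_contra! hfar
  have hij := hS.ne
  set e := fun N => S.epsSq N ^ 2
  set W := fun N => Zq (S.delta N) (S.w N) i k₀ with hW_def
  set V := fun N => Zq (S.delta N) (S.w N) j k₀ with hV_def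
  set P := fun N => ∑ l ∈ {i, j}ᶜ, m l *
    (Zq (S.delta N) (S.z N) i l - Zq (S.delta N) (S.z N) j l)
  set Q := fun N => ∑ l ∈ {i, j}ᶜ, m l *
    (Zq (S.delta N) (S.w N) i l - Zq (S.delta N) (S.w N) j l) with hQ_def
  obtain ⟨hVW, hWV⟩ := hS.Zq_w_comparable hm hm3 hk₀i hk₀j
  obtain ⟨hP, hQ⟩ := hS.sum_compl_pair_sub_isBigO hm hk₀i hk₀j hfar
  have he : e =o[atTop] W :=
    S.epsSq_sq_isLittleO_Zq_w hk₀i.symm (by rw [hS.wLim_left_eq_zero hm, hwk₀])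
  have hee : (fun N => e N * e N) =o[atTop] W :=
    ((isBigO_refl e atTop).mul ((S.tendsto_epsSq.pow 2).isBigO_one ℂ)).trans_isLittleO
      (by simpa using he)
  have hQP : Q =O[atTop] fun N => e N * P N :=
    ((S.sub_w_div_sub_z_isBigO hij hS.ZLim_ne_zero (hS.zLim_left_ne hm hij.symm)).mul
      (isBigO_refl P atTop)).congr (fun N => by
        rw [div_mul_eq_mul_div, div_eq_iff (S.sub_z_ne_zero N hij),
          ← S.sub_z_mul_sum_compl_pair_w N hij]
        ring) fun N => rfl
  have heZi := S.epsSq_sq_mul_Zq_z_isLittleO hk₀i.symm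
    (hS.ZLim_eq_zero i k₀ hk₀i.symm (by tauto))
  have heZj := (S.epsSq_sq_mul_Zq_z_isLittleO hk₀j.symm
    (hS.symm.ZLim_eq_zero j k₀ hk₀j.symm (by tauto))).trans_isBigO hVW
  have heP : (fun N => e N * P N) =o[atTop] W :=
    (((heZi.const_mul_left (m k₀)).sub (heZj.const_mul_left (m k₀))).add
      (((isBigO_refl e atTop).mul hP).trans_isLittleO hee)).congr (fun N => by ring) fun N => rfl
  have hmk₀ : m k₀ ≠ 0 := by simpa using hm {k₀} (singleton_nonempty k₀)
  have hWVo : (W - V) =o[atTop] W :=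
    (((hQP.trans_isLittleO heP).sub (hQ.trans_isLittleO he)).const_mul_left (m k₀)⁻¹).congr
      (fun N => by simp only [hQ_def, hW_def, hV_def, Pi.sub_apply]; field_simp; ring) fun N => rfl
  exact isLittleO_irrefl (Eventually.of_forall fun N => S.Zq_w_ne_zero N hk₀i.symm).frequently
    (hWV.trans_isLittleO hWVo)

end ZSupportedOnPair

end SingularSeq

theorem Matrix.exists_diag_eq_zero_of_trace_eq {n : ℕ} {B : Matrix (Fin n) (Fin n) ℕ}
    {i j : Fin n} (h01 : ∀ k, B k k ≤ 1) (hij : i ≠ j) (hBi : B i i = 0) (hBj : B j j = 0)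
    (htr : ((B.trace : ℕ) : ℤ) = (n : ℤ) - 3) :
    ∃ k₀, k₀ ≠ i ∧ k₀ ≠ j ∧ B k₀ k₀ = 0 ∧ ∀ l, l ≠ i → l ≠ j → l ≠ k₀ → B l l ≠ 0 := by
  have hcard : #({i, j}ᶜ : Finset (Fin n)) = n - 2 := by
    rw [card_compl, card_pair hij, Fintype.card_fin]
  have h2 : 2 ≤ n := by simpa [card_pair hij] using card_le_univ ({i, j} : Finset (Fin n))
  have hsum := sum_add_sum_compl {i, j} fun k => B k k
  rw [sum_pair hij, hBi, hBj] at hsum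
  have htr' : ((∑ k, B k k : ℕ) : ℤ) = n - 3 := htr
  obtain ⟨k₀, hk₀, hBk₀, hB⟩ :=
    exists_eq_zero_of_sum_add_one_eq_card (fun k _ => h01 k) (s := {i, j}ᶜ) (by omega)
  simp only [mem_compl, mem_insert, mem_singleton, not_or] at hk₀
  exact ⟨k₀, hk₀.1, hk₀.2, hBk₀, fun l hli hlj => hB l (by simp [hli, hlj])⟩

namespace IsZWMatrices

variable {n : ℕ} {m : Fin n → ℂ} {S : SingularSeq n m} {A B : Matrix (Fin n) (Fin n) ℕ}
  {i j k l : Fin n}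

theorem diag_A_eq_zero_iff (h : IsZWMatrices S A B) (k : Fin n) : A k k = 0 ↔ S.zLim k = 0 := by
  have h01 : A k k = 0 ↔ ¬A k k = 1 := by rcases h.zeroOne_A k k with hk | hk <;> simp [hk]
  rw [h01, h.diag_A, not_not]
  exact ⟨fun h0 => tendsto_nhds_unique (S.tendsto_zLim k) h0, fun h0 => h0 ▸ S.tendsto_zLim k⟩

theorem A_eq_zero_iff (h : IsZWMatrices S A B) (hkl : k ≠ l) : A k l = 0 ↔ S.ZLim k l = 0 := by
  have h01 : A k l = 0 ↔ ¬A k l = 1 := by rcases h.zeroOne_A k l with hk | hk <;> simp [hk]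
  rw [h01, h.off_A k l hkl, not_not]
  exact ⟨fun h0 => tendsto_nhds_unique (S.tendsto_ZLim hkl) h0,
    fun h0 => h0 ▸ S.tendsto_ZLim hkl⟩

theorem diag_B_eq_zero_iff (h : IsZWMatrices S A B) (k : Fin n) : B k k = 0 ↔ S.wLim k = 0 :=
  h.swap_s7.diag_A_eq_zero_iff k

theorem B_eq_zero_iff (h : IsZWMatrices S A B) (hkl : k ≠ l) : B k l = 0 ↔ S.WLim k l = 0 :=
  h.swap_s7.A_eq_zero_iff hkl

theorem zSupportedOnPair (h : IsZWMatrices S A B) (hij : i ≠ j) (htr : A.trace = 2)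
    (hii : A i i = 1) (hjj : A j j = 1)
    (hoff : ∀ k l, k ≠ l → ¬((k = i ∧ l = j) ∨ (k = j ∧ l = i)) → A k l = 0) :
    S.ZSupportedOnPair i j := by
  have hsum := sum_add_sum_compl {i, j} fun k => A k k
  rw [sum_pair hij, hii, hjj, show ∑ k, A k k = 2 from htr, add_eq_left] at hsum
  refine ⟨hij, fun k hki hkj => ?_, fun k l hkl hp => (h.A_eq_zero_iff hkl).1 (hoff k l hkl hp),
    fun h0 => ?_, fun h0 => ?_⟩
  · exact (h.diag_A_eq_zero_iff k).1 (sum_eq_zero_iff.1 hsum k (by simp [hki, hkj]))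
  · simp [(h.diag_A_eq_zero_iff i).2 h0] at hii
  · simp [(h.diag_A_eq_zero_iff j).2 h0] at hjj

theorem second_rule_of_trace_A_eq_two (h : IsZWMatrices S A B)
    (hm : ∀ I : Finset (Fin n), I.Nonempty → ∑ k ∈ I, m k ≠ 0) (hij : i ≠ j)
    (htr : A.trace = 2) (hii : A i i = 1) (hjj : A j j = 1)
    (hoff : ∀ k l, k ≠ l → ¬((k = i ∧ l = j) ∨ (k = j ∧ l = i)) → A k l = 0) :
    (∀ k, B i k = 0 ∧ B j k = 0) ∧
      (m i ^ 3 + m j ^ 3 ≠ 0 → ((B.trace : ℕ) : ℤ) ≠ (n : ℤ) - 3) := by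
  have hS := h.zSupportedOnPair hij htr hii hjj hoff
  have hrow : ∀ {p q}, S.ZSupportedOnPair p q → ∀ k, B p k = 0 := fun {p} _ hpq k => by
    rcases eq_or_ne k p with rfl | hk
    · exact (h.diag_B_eq_zero_iff k).2 (hpq.wLim_left_eq_zero hm)
    · exact (h.B_eq_zero_iff hk.symm).2 (hpq.WLim_left_eq_zero hm hk)
  refine ⟨fun k => ⟨hrow hS k, hrow hS.symm k⟩, fun hm3 htrB => ?_⟩
  obtain ⟨k₀, hk₀i, hk₀j, hk₀, hfar⟩ := Matrix.exists_diag_eq_zero_of_trace_eq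
    (fun k => by rcases h.zeroOne_B k k with hk | hk <;> omega) hij (hrow hS i)
    (hrow hS.symm j) htrB
  obtain ⟨l, hli, hlj, hlk₀, hl⟩ :=
    hS.exists_ne_wLim_eq_zero hm hm3 hk₀i hk₀j ((h.diag_B_eq_zero_iff k₀).1 hk₀)
  exact hfar l hli hlj hlk₀ ((h.diag_B_eq_zero_iff l).2 hl)

end IsZWMatrices

theorem second_rule_of_trace_two_matrices_general (n : ℕ) (m : Fin n → ℂ)
    (hm : ∀ I : Finset (Fin n), I.Nonempty → ∑ k ∈ I, m k ≠ 0)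
    (S : SingularSeq n m) (A B : Matrix (Fin n) (Fin n) ℕ)
    (hAB : IsZWMatrices S A B) :
    (∀ i j : Fin n, i ≠ j → Matrix.trace A = 2 → A i i = 1 → A j j = 1 →
      (∀ k l : Fin n, k ≠ l → ¬ ((k = i ∧ l = j) ∨ (k = j ∧ l = i)) → A k l = 0) →
      (∀ k : Fin n, B i k = 0 ∧ B j k = 0) ∧
        (m i ^ 3 + m j ^ 3 ≠ 0 → ((Matrix.trace B : ℕ) : ℤ) ≠ (n : ℤ) - 3)) ∧
    (∀ i j : Fin n, i ≠ j → Matrix.trace B = 2 → B i i = 1 → B j j = 1 →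
      (∀ k l : Fin n, k ≠ l → ¬ ((k = i ∧ l = j) ∨ (k = j ∧ l = i)) → B k l = 0) →
      (∀ k : Fin n, A i k = 0 ∧ A j k = 0) ∧
        (m i ^ 3 + m j ^ 3 ≠ 0 → ((Matrix.trace A : ℕ) : ℤ) ≠ (n : ℤ) - 3)) :=
  ⟨fun _ _ hij htr hii hjj hoff => hAB.second_rule_of_trace_A_eq_two hm hij htr hii hjj hoff,
    fun _ _ hij htr hii hjj hoff => hAB.swap_s7.second_rule_of_trace_A_eq_two hm hij htr hii hjj hoff⟩

theorem second_rule_of_trace_two_matrices (n : ℕ) (hn : 2 ≤ n) (m : Fin n → ℂ)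
    (hm : ∀ I : Finset (Fin n), I.Nonempty → ∑ k ∈ I, m k ≠ 0)
    (S : SingularSeq n m) (A B : Matrix (Fin n) (Fin n) ℕ)
    (hAB : IsZWMatrices S A B) :
    (∀ i j : Fin n, i ≠ j → Matrix.trace A = 2 → A i i = 1 → A j j = 1 →
      (∀ k l : Fin n, k ≠ l → ¬ ((k = i ∧ l = j) ∨ (k = j ∧ l = i)) → A k l = 0) →
      (∀ k : Fin n, B i k = 0 ∧ B j k = 0) ∧
        (m i ^ 3 + m j ^ 3 ≠ 0 → ((Matrix.trace B : ℕ) : ℤ) ≠ (n : ℤ) - 3)) ∧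
    (∀ i j : Fin n, i ≠ j → Matrix.trace B = 2 → B i i = 1 → B j j = 1 →
      (∀ k l : Fin n, k ≠ l → ¬ ((k = i ∧ l = j) ∨ (k = j ∧ l = i)) → B k l = 0) →
      (∀ k : Fin n, A i k = 0 ∧ A j k = 0) ∧
        (m i ^ 3 + m j ^ 3 ≠ 0 → ((Matrix.trace A : ℕ) : ℤ) ≠ (n : ℤ) - 3)) :=
  second_rule_of_trace_two_matrices_general n m hm S A B hAB
end

section
/- (First Rule of Triangles) Let n ≥ 3 and let A and B be the z-matrix and w-matrix of a singular sequence. Then for all 1 ≤ i < j < k ≤ n, (a_{ii} + a_{jj} + a_{kk}) (a_{ii} + a_{ij} + a_{ik}) (a_{ik} + a_{jk} + a_{kk}) (a_{ij} + a_{jj} + a_{jk}) ≠ 16. The same statement holds with A replaced by B. -/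
/-! For a pair `k ≠ l` the normalization `δ² z_{kl} w_{kl} = 1` cubes to
`(ε² Z_{kl})² · (ε² z_{kl}) · (w_{kl} / ε²)³ = 1`.
A product equal to `16` forces all four factors to be `2`, which means one vertex `x` with
`a_{xx} = 0` joined by two nonzero edges to vertices `y, y'` with `a_{yy} = a_{y'y'} = 1` and
`a_{yy'} = 0`. On the edges `xy` and `xy'` the first two factors have nonzero limits, so
`w_{xy} / ε²` and `w_{xy'} / ε²` stay bounded, hence so does their difference `w_{yy'} / ε²`.
On the edge `yy'` the first factor tends to `0` and the second stays bounded, so the product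
tends to `0`, not `1`. The w-matrix is the same argument with `z` and `w` exchanged. -/

open Filter Finset

open Asymptotics Topology

lemma sq_mul_mul_cube_eq_one_of_normalize {n : ℕ} {δ : Fin n → Fin n → ℂ} {z w : Fin n → ℂ}
    {e : ℂ} {p q : Fin n} (he : e ≠ 0) (h : δ p q ^ 2 * (z q - z p) * (w q - w p) = 1) :
    (e * Zq δ z p q) ^ 2 * (e * (z q - z p)) * ((w q - w p) / e) ^ 3 = 1 := by
  have h3 : (δ p q ^ 2 * (z q - z p) * (w q - w p)) ^ 3 = 1 := by rw [h, one_pow]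
  unfold Zq
  field_simp
  linear_combination h3

section Asymptotics

variable {ι : Type*} {l : Filter ι} {a b c : ι → ℂ}

lemma isBigO_one_of_sq_mul_mul_cube_eq_one (h : ∀ N, a N ^ 2 * b N * c N ^ 3 = 1)
    {La Lb : ℂ} (ha : Tendsto a l (𝓝 La)) (hLa : La ≠ 0) (hb : Tendsto b l (𝓝 Lb)) (hLb : Lb ≠ 0) :
    c =O[l] (fun _ => (1 : ℂ)) := by
  have hc : Tendsto (c ^ 3) l (𝓝 (La ^ 2 * Lb)⁻¹) := by
    have hinv := ((ha.pow 2).mul hb).inv₀ (mul_ne_zero (pow_ne_zero 2 hLa) hLb)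
    refine hinv.congr fun N => ?_
    rw [Pi.pow_apply, eq_inv_of_mul_eq_one_right (h N)]
  refine IsBigO.of_pow three_ne_zero ?_
  simpa only [Pi.pow_def, one_pow] using hc.isBigO_one ℂ

lemma false_of_sq_mul_mul_cube_eq_one [l.NeBot] (h : ∀ N, a N ^ 2 * b N * c N ^ 3 = 1)
    (ha : Tendsto a l (𝓝 0)) (hb : b =O[l] (fun _ => (1 : ℂ)))
    (hc : c =O[l] (fun _ => (1 : ℂ))) : False := by
  have hbc : (fun N => b N * c N ^ 3) =O[l] (fun _ => (1 : ℂ)) := by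
    simpa using hb.mul (hc.pow 3)
  have h0 : Tendsto (fun N => a N ^ 2 * b N * c N ^ 3) l (𝓝 0) := by
    have ha2 : Tendsto (fun N => a N ^ 2) l (𝓝 0) := by simpa using ha.pow 2
    simpa only [mul_assoc] using ha2.zero_mul_isBoundedUnder_le ((isBigO_one_iff ℂ).mp hbc)
  simp only [h, tendsto_const_nhds_iff] at h0
  exact one_ne_zero h0

end Asymptotics

lemma exists_hub_of_triangle_product_eq_sixteen {α : Type*} {A : Matrix α α ℕ}
    (h01 : ∀ i j, A i j = 0 ∨ A i j = 1) (hsymm : ∀ i j, A i j = A j i) {i j k : α}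
    (hij : i ≠ j) (hik : i ≠ k) (hjk : j ≠ k)
    (hP : (A i i + A j j + A k k) * (A i i + A i j + A i k) *
      (A i k + A j k + A k k) * (A i j + A j j + A j k) = 16) :
    ∃ x y y', x ≠ y ∧ x ≠ y' ∧ y ≠ y' ∧ A x x = 0 ∧ A y y = 1 ∧ A y' y' = 1 ∧
      A x y = 1 ∧ A x y' = 1 ∧ A y y' = 0 := by
  rcases h01 i i with h1 | h1 <;> rcases h01 j j with h2 | h2 <;>
    rcases h01 k k with h3 | h3 <;> rcases h01 i j with h4 | h4 <;>
    rcases h01 i k with h5 | h5 <;> rcases h01 j k with h6 | h6 <;>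
    simp only [h1, h2, h3, h4, h5, h6] at hP <;> norm_num at hP
  · exact ⟨i, j, k, hij, hik, hjk, h1, h2, h3, h4, h5, h6⟩
  · exact ⟨j, i, k, hij.symm, hjk, hik, h2, h1, h3, hsymm j i ▸ h4, h6, h5⟩
  · exact ⟨k, i, j, hik.symm, hjk.symm, hij, h3, h1, h2, hsymm k i ▸ h5, hsymm k j ▸ h6, h4⟩

section Hub

variable {ι : Type*} {l : Filter ι} {n : ℕ} {z w : ι → Fin n → ℂ}
  {δ : ι → Fin n → Fin n → ℂ} {e : ι → ℂ}

lemma false_of_hub [l.NeBot] (he : ∀ N, e N ≠ 0)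
    (hnorm : ∀ N p q, p ≠ q → δ N p q ^ 2 * (z N q - z N p) * (w N q - w N p) = 1)
    (hconv_z : ∀ k, ∃ L, Tendsto (fun N => e N * z N k) l (𝓝 L))
    (hconv_Z : ∀ p q, p ≠ q → ∃ L, Tendsto (fun N => e N * Zq (δ N) (z N) p q) l (𝓝 L))
    {x y y' : Fin n} (hxy : x ≠ y) (hxy' : x ≠ y') (hyy' : y ≠ y')
    (hx : Tendsto (fun N => e N * z N x) l (𝓝 0))
    (hy : ¬ Tendsto (fun N => e N * z N y) l (𝓝 0))
    (hy' : ¬ Tendsto (fun N => e N * z N y') l (𝓝 0))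
    (hxy_edge : ¬ Tendsto (fun N => e N * Zq (δ N) (z N) x y) l (𝓝 0))
    (hxy'_edge : ¬ Tendsto (fun N => e N * Zq (δ N) (z N) x y') l (𝓝 0))
    (hyy'_edge : Tendsto (fun N => e N * Zq (δ N) (z N) y y') l (𝓝 0)) : False := by
  have spoke_bounded : ∀ q, x ≠ q → ¬ Tendsto (fun N => e N * z N q) l (𝓝 0) →
      ¬ Tendsto (fun N => e N * Zq (δ N) (z N) x q) l (𝓝 0) →
      (fun N => (w N q - w N x) / e N) =O[l] (fun _ => (1 : ℂ)) := by
    intro q hxq hq hedge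
    obtain ⟨L, hL⟩ := hconv_z q
    obtain ⟨M, hM⟩ := hconv_Z x q hxq
    refine isBigO_one_of_sq_mul_mul_cube_eq_one
      (fun N => sq_mul_mul_cube_eq_one_of_normalize (he N) (hnorm N x q hxq))
      hM (by rintro rfl; exact hedge hM) (Lb := L) ?_ (by rintro rfl; exact hq hL)
    simpa only [mul_sub, sub_zero] using hL.sub hx
  have hc : (fun N => (w N y' - w N y) / e N) =O[l] (fun _ => (1 : ℂ)) :=
    ((spoke_bounded y' hxy' hy' hxy'_edge).sub (spoke_bounded y hxy hy hxy_edge)).congr_left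
      fun N => by ring
  have hb : (fun N => e N * (z N y' - z N y)) =O[l] (fun _ => (1 : ℂ)) := by
    obtain ⟨L, hL⟩ := hconv_z y
    obtain ⟨L', hL'⟩ := hconv_z y'
    simpa only [mul_sub] using (hL'.sub hL).isBigO_one ℂ
  exact false_of_sq_mul_mul_cube_eq_one
    (fun N => sq_mul_mul_cube_eq_one_of_normalize (he N) (hnorm N y y' hyy')) hyy'_edge hb hc

lemma triangle_product_ne_sixteen [l.NeBot] (he : ∀ N, e N ≠ 0)
    (hnorm : ∀ N p q, p ≠ q → δ N p q ^ 2 * (z N q - z N p) * (w N q - w N p) = 1)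
    (hconv_z : ∀ k, ∃ L, Tendsto (fun N => e N * z N k) l (𝓝 L))
    (hconv_Z : ∀ p q, p ≠ q → ∃ L, Tendsto (fun N => e N * Zq (δ N) (z N) p q) l (𝓝 L))
    {A : Matrix (Fin n) (Fin n) ℕ} (h01 : ∀ i j, A i j = 0 ∨ A i j = 1)
    (hsymm : ∀ i j, A i j = A j i)
    (hdiag : ∀ i, A i i = 1 ↔ ¬ Tendsto (fun N => e N * z N i) l (𝓝 0))
    (hoff : ∀ i j, i ≠ j →
      (A i j = 1 ↔ ¬ Tendsto (fun N => e N * Zq (δ N) (z N) i j) l (𝓝 0)))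
    {i j k : Fin n} (hij : i ≠ j) (hik : i ≠ k) (hjk : j ≠ k) :
    (A i i + A j j + A k k) * (A i i + A i j + A i k) *
      (A i k + A j k + A k k) * (A i j + A j j + A j k) ≠ 16 := by
  intro hP
  obtain ⟨x, y, y', hxy, hxy', hyy', hx, hy, hy', hexy, hexy', heyy'⟩ :=
    exists_hub_of_triangle_product_eq_sixteen h01 hsymm hij hik hjk hP
  exact false_of_hub he hnorm hconv_z hconv_Z hxy hxy' hyy' (by simpa [hx] using hdiag x)
    ((hdiag y).mp hy) ((hdiag y').mp hy') ((hoff x y hxy).mp hexy) ((hoff x y' hxy').mp hexy')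
    (by simpa [heyy'] using hoff y y' hyy')

end Hub

theorem first_rule_of_triangles_general (n : ℕ) (m : Fin n → ℂ)
    (S : SingularSeq n m) (A B : Matrix (Fin n) (Fin n) ℕ)
    (hAB : IsZWMatrices S A B) :
    ∀ i j k : Fin n, i < j → j < k →
      (A i i + A j j + A k k) * (A i i + A i j + A i k) *
          (A i k + A j k + A k k) * (A i j + A j j + A j k) ≠ 16 ∧
      (B i i + B j j + B k k) * (B i i + B i j + B i k) *
          (B i k + B j k + B k k) * (B i j + B j j + B j k) ≠ 16 := by
  intro i j k hij hjk
  have hik := hij.trans hjk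
  have he : ∀ N, (S.eps N : ℂ) ^ 2 ≠ 0 := fun N =>
    pow_ne_zero 2 (Complex.ofReal_ne_zero.mpr (S.eps_pos N).ne')
  have hnorm_w : ∀ N p q, p ≠ q →
      S.delta N p q ^ 2 * (S.w N q - S.w N p) * (S.z N q - S.z N p) = 1 := fun N p q hpq => by
    rw [mul_right_comm]
    exact S.normalize N p q hpq
  exact ⟨triangle_product_ne_sixteen he S.normalize S.conv_z S.conv_Z hAB.zeroOne_A hAB.symm_A
      hAB.diag_A hAB.off_A hij.ne hik.ne hjk.ne,
    triangle_product_ne_sixteen he hnorm_w S.conv_w S.conv_W hAB.zeroOne_B hAB.symm_B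
      hAB.diag_B hAB.off_B hij.ne hik.ne hjk.ne⟩

theorem first_rule_of_triangles (n : ℕ) (hn : 3 ≤ n) (m : Fin n → ℂ)
    (hm : ∀ I : Finset (Fin n), I.Nonempty → ∑ k ∈ I, m k ≠ 0)
    (S : SingularSeq n m) (A B : Matrix (Fin n) (Fin n) ℕ)
    (hAB : IsZWMatrices S A B) :
    ∀ i j k : Fin n, i < j → j < k →
      (A i i + A j j + A k k) * (A i i + A i j + A i k) *
          (A i k + A j k + A k k) * (A i j + A j j + A j k) ≠ 16 ∧
      (B i i + B j j + B k k) * (B i i + B i j + B i k) *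
          (B i k + B j k + B k k) * (B i j + B j j + B j k) ≠ 16 :=
  first_rule_of_triangles_general n m S A B hAB
end

section
/- (Third Rule of Triangles) Let n ≥ 3 and let A and B be the z-matrix and w-matrix of a singular sequence and C = A + B. Then for all 1 ≤ i < j < k ≤ n, the sum c_{ij} + c_{jk} + c_{ik} is neither 4 nor 5. -/
open Filter Finset

/-!
Along an edge `ij` put `p = z_{ij}/ε`, `q = w_{ij}/ε`, `u = ε²Z_{ij}`, `v = ε²W_{ij}`. The
normalization gives `u = p⁴v³`, `v = q⁴u³` and `(pq)²uv = 1`, while `p` and `q` sum to zero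
around a triangle. A nonzero limit of `v` bounds `p`, and even forces `p → 0` when `u → 0`;
conversely a bounded `p` with `v → 0` forces `u → 0`, so does a null `p`, and bounded `p` and
`q` forbid `u, v → 0` together. As two bounded (null) sides of a triangle make the third one
bounded (null), every pattern of 4 or 5 nonzero limits on a triangle breaks one of these rules,
possibly after exchanging `z` and `w`.
-/

open Topology Asymptotics

/-- The rescaled data `u = ε²Z_{ij}`, `v = ε²W_{ij}`, `p = z_{ij}/ε`, `q = w_{ij}/ε` of one edge
of a singular sequence, with the relations the normalization `δ²z_{ij}w_{ij} = 1` imposes. -/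
structure ScaledEdge where
  u : ℕ → ℂ
  v : ℕ → ℂ
  p : ℕ → ℂ
  q : ℕ → ℂ
  limU : ℂ
  limV : ℂ
  u_eq : ∀ N, u N = p N ^ 4 * v N ^ 3
  v_eq : ∀ N, v N = q N ^ 4 * u N ^ 3
  pq_sq_mul_uv : ∀ N, (p N * q N) ^ 2 * (u N * v N) = 1
  tendsto_u : Tendsto u atTop (𝓝 limU)
  tendsto_v : Tendsto v atTop (𝓝 limV)

namespace ScaledEdge

variable (e : ScaledEdge)

def swap : ScaledEdge where
  u := e.v
  v := e.u
  p := e.q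
  q := e.p
  limU := e.limV
  limV := e.limU
  u_eq := e.v_eq
  v_eq := e.u_eq
  pq_sq_mul_uv N := by rw [mul_comm (e.q N), mul_comm (e.v N)]; exact e.pq_sq_mul_uv N
  tendsto_u := e.tendsto_v
  tendsto_v := e.tendsto_u

noncomputable def weight : ℕ := (if e.limU = 0 then 0 else 1) + (if e.limV = 0 then 0 else 1)

variable {e}

theorem tendsto_p_pow_four (hV : e.limV ≠ 0) :
    Tendsto (e.p ^ 4) atTop (𝓝 (e.limU / e.limV ^ 3)) := by
  refine (e.tendsto_u.div (e.tendsto_v.pow 3) (pow_ne_zero 3 hV)).congr' ?_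
  filter_upwards [e.tendsto_v.eventually_ne hV] with N hN
  rw [Pi.div_apply, e.u_eq, mul_div_cancel_right₀ _ (pow_ne_zero 3 hN), Pi.pow_apply]

theorem p_isBigO_one (hV : e.limV ≠ 0) : e.p =O[atTop] (fun _ => (1 : ℝ)) :=
  .of_pow four_ne_zero <|
    ((tendsto_p_pow_four hV).isBigO_one ℝ).congr_right fun _ => (one_pow 4).symm

theorem tendsto_p_nhds_zero (hU : e.limU = 0) (hV : e.limV ≠ 0) : Tendsto e.p atTop (𝓝 0) := by
  have h4 := tendsto_p_pow_four hV
  rw [hU, zero_div, ← isLittleO_one_iff ℝ] at h4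
  exact (isLittleO_one_iff ℝ).mp <| .of_pow (h4.congr_right fun _ => (one_pow 4).symm) four_ne_zero

theorem limU_eq_zero_of_tendsto_u (h : Tendsto e.u atTop (𝓝 0)) : e.limU = 0 :=
  tendsto_nhds_unique e.tendsto_u h

theorem limU_eq_zero_of_isBigO_p (hp : e.p =O[atTop] (fun _ => (1 : ℝ))) (hV : e.limV = 0) :
    e.limU = 0 := by
  refine limU_eq_zero_of_tendsto_u ((isLittleO_one_iff ℝ).mp ?_)
  have hv := (isLittleO_one_iff ℝ).mpr (hV ▸ e.tendsto_v)
  simpa only [← e.u_eq, one_pow, mul_one] using (hp.pow 4).mul_isLittleO (hv.pow three_pos)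

theorem limU_eq_zero_of_tendsto_p (hp : Tendsto e.p atTop (𝓝 0)) : e.limU = 0 := by
  refine limU_eq_zero_of_tendsto_u ((isLittleO_one_iff ℝ).mp ?_)
  simpa only [← e.u_eq, one_pow, mul_one] using
    (((isLittleO_one_iff ℝ).mpr hp).pow four_pos).mul_isBigO ((e.tendsto_v.isBigO_one ℝ).pow 3)

theorem limU_ne_zero_or_limV_ne_zero (hp : e.p =O[atTop] (fun _ => (1 : ℝ)))
    (hq : e.q =O[atTop] (fun _ => (1 : ℝ))) : e.limU ≠ 0 ∨ e.limV ≠ 0 := by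
  by_contra! h
  have hu := (isLittleO_one_iff ℝ).mpr (h.1 ▸ e.tendsto_u)
  have h1 := ((hp.mul hq).pow 2).mul_isLittleO (hu.mul_isBigO (e.tendsto_v.isBigO_one ℝ))
  simp only [e.pq_sq_mul_uv, one_pow, mul_one, isLittleO_one_iff] at h1
  exact one_ne_zero (tendsto_nhds_unique tendsto_const_nhds h1)

end ScaledEdge

structure ScaledTriangle where
  e₁ : ScaledEdge
  e₂ : ScaledEdge
  e₃ : ScaledEdge
  p_sum : ∀ N, e₁.p N + e₂.p N + e₃.p N = 0
  q_sum : ∀ N, e₁.q N + e₂.q N + e₃.q N = 0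

namespace ScaledTriangle

variable (t : ScaledTriangle)

def swap : ScaledTriangle where
  e₁ := t.e₁.swap
  e₂ := t.e₂.swap
  e₃ := t.e₃.swap
  p_sum := t.q_sum
  q_sum := t.p_sum

def rotate : ScaledTriangle where
  e₁ := t.e₂
  e₂ := t.e₃
  e₃ := t.e₁
  p_sum N := by linear_combination t.p_sum N
  q_sum N := by linear_combination t.q_sum N

theorem p₃_eq : t.e₃.p = -(t.e₁.p + t.e₂.p) :=
  funext fun N => by simp only [Pi.neg_apply, Pi.add_apply]; linear_combination t.p_sum N

variable {t}

theorem p₃_isBigO_one (h₁ : t.e₁.p =O[atTop] (fun _ => (1 : ℝ)))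
    (h₂ : t.e₂.p =O[atTop] (fun _ => (1 : ℝ))) : t.e₃.p =O[atTop] (fun _ => (1 : ℝ)) :=
  t.p₃_eq ▸ (h₁.add h₂).neg_left

theorem limU₃_eq_zero_of_limV_ne_zero (hV₁ : t.e₁.limV ≠ 0) (hV₂ : t.e₂.limV ≠ 0)
    (hV₃ : t.e₃.limV = 0) : t.e₃.limU = 0 :=
  ScaledEdge.limU_eq_zero_of_isBigO_p
    (p₃_isBigO_one (ScaledEdge.p_isBigO_one hV₁) (ScaledEdge.p_isBigO_one hV₂)) hV₃

theorem limU₃_eq_zero_of_limU_eq_zero (hU₁ : t.e₁.limU = 0) (hV₁ : t.e₁.limV ≠ 0)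
    (hU₂ : t.e₂.limU = 0) (hV₂ : t.e₂.limV ≠ 0) : t.e₃.limU = 0 := by
  refine ScaledEdge.limU_eq_zero_of_tendsto_p ?_
  rw [t.p₃_eq, ← neg_zero, ← add_zero 0]
  exact ((ScaledEdge.tendsto_p_nhds_zero hU₁ hV₁).add
    (ScaledEdge.tendsto_p_nhds_zero hU₂ hV₂)).neg

theorem limU₃_ne_zero_or_limV₃_ne_zero (hU₁ : t.e₁.limU ≠ 0) (hV₁ : t.e₁.limV ≠ 0)
    (hU₂ : t.e₂.limU ≠ 0) (hV₂ : t.e₂.limV ≠ 0) : t.e₃.limU ≠ 0 ∨ t.e₃.limV ≠ 0 :=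
  ScaledEdge.limU_ne_zero_or_limV_ne_zero
    (p₃_isBigO_one (ScaledEdge.p_isBigO_one hV₁) (ScaledEdge.p_isBigO_one hV₂))
    (p₃_isBigO_one (t := t.swap) (ScaledEdge.p_isBigO_one hU₁) (ScaledEdge.p_isBigO_one hU₂))

variable (t) in
theorem weight_sum_ne : t.e₁.weight + t.e₂.weight + t.e₃.weight ≠ 4 ∧
    t.e₁.weight + t.e₂.weight + t.e₃.weight ≠ 5 := by
  obtain hU₁ | hU₁ := eq_or_ne t.e₁.limU 0 <;> obtain hV₁ | hV₁ := eq_or_ne t.e₁.limV 0 <;>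
  obtain hU₂ | hU₂ := eq_or_ne t.e₂.limU 0 <;> obtain hV₂ | hV₂ := eq_or_ne t.e₂.limV 0 <;>
  obtain hU₃ | hU₃ := eq_or_ne t.e₃.limU 0 <;> obtain hV₃ | hV₃ := eq_or_ne t.e₃.limV 0 <;>
  simp only [ScaledEdge.weight, hU₁, hV₁, hU₂, hV₂, hU₃, hV₃, ↓reduceIte, ne_eq] <;>
  norm_num <;>
  -- each of the 21 remaining patterns breaks one of the three rules for some rotation of `t`
  -- or of `t.swap`
  first
  | exact hU₃ (t.limU₃_eq_zero_of_limV_ne_zero hV₁ hV₂ hV₃)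
  | exact hV₃ (t.swap.limU₃_eq_zero_of_limV_ne_zero hU₁ hU₂ hU₃)
  | exact hU₃ (t.limU₃_eq_zero_of_limU_eq_zero hU₁ hV₁ hU₂ hV₂)
  | exact hV₃ (t.swap.limU₃_eq_zero_of_limU_eq_zero hV₁ hU₁ hV₂ hU₂)
  | exact (t.limU₃_ne_zero_or_limV₃_ne_zero hU₁ hV₁ hU₂ hV₂).elim
        (absurd hU₃) (absurd hV₃)
  | exact hU₁ (t.rotate.limU₃_eq_zero_of_limV_ne_zero hV₂ hV₃ hV₁)
  | exact hV₁ (t.rotate.swap.limU₃_eq_zero_of_limV_ne_zero hU₂ hU₃ hU₁)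
  | exact hU₁ (t.rotate.limU₃_eq_zero_of_limU_eq_zero hU₂ hV₂ hU₃ hV₃)
  | exact hV₁ (t.rotate.swap.limU₃_eq_zero_of_limU_eq_zero hV₂ hU₂ hV₃ hU₃)
  | exact (t.rotate.limU₃_ne_zero_or_limV₃_ne_zero hU₂ hV₂ hU₃ hV₃).elim
        (absurd hU₁) (absurd hV₁)
  | exact hU₂ (t.rotate.rotate.limU₃_eq_zero_of_limV_ne_zero hV₃ hV₁ hV₂)
  | exact hV₂ (t.rotate.rotate.swap.limU₃_eq_zero_of_limV_ne_zero hU₃ hU₁ hU₂)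
  | exact hU₂ (t.rotate.rotate.limU₃_eq_zero_of_limU_eq_zero hU₃ hV₃ hU₁ hV₁)
  | exact hV₂ (t.rotate.rotate.swap.limU₃_eq_zero_of_limU_eq_zero hV₃ hU₃ hV₁ hU₁)
  | exact (t.rotate.rotate.limU₃_ne_zero_or_limV₃_ne_zero hU₃ hV₃ hU₁ hV₁).elim
        (absurd hU₂) (absurd hV₂)

end ScaledTriangle

theorem normalized_pow_identity {ε δ d e : ℂ} (hε : ε ≠ 0) (h : δ ^ 2 * d * e = 1) :
    ε ^ 2 * (δ ^ 3 * d) = (d / ε) ^ 4 * (ε ^ 2 * (δ ^ 3 * e)) ^ 3 := by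
  rw [div_pow, div_mul_eq_mul_div, eq_div_iff (pow_ne_zero 4 hε)]
  linear_combination (-ε ^ 6 * δ ^ 3 * d * ((δ ^ 2 * d * e) ^ 2 + δ ^ 2 * d * e + 1)) * h

theorem normalized_product_identity {ε δ d e : ℂ} (hε : ε ≠ 0) (h : δ ^ 2 * d * e = 1) :
    (d / ε * (e / ε)) ^ 2 * (ε ^ 2 * (δ ^ 3 * d) * (ε ^ 2 * (δ ^ 3 * e))) = 1 := by
  field_simp
  linear_combination ((δ ^ 2 * d * e) ^ 2 + δ ^ 2 * d * e + 1) * h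

theorem eq_ite_of_iff_not_tendsto_zero {α X : Type*} [TopologicalSpace X] [T2Space X] [Zero X]
    [DecidableEq X] {l : Filter α} [l.NeBot] {a : ℕ} {f : α → X} {L : X} (ha : a = 0 ∨ a = 1)
    (h : a = 1 ↔ ¬ Tendsto f l (𝓝 0)) (hf : Tendsto f l (𝓝 L)) :
    a = if L = 0 then 0 else 1 := by
  split_ifs with hL
  · exact ha.resolve_right fun ha1 => h.mp ha1 (hL ▸ hf)
  · exact h.mpr fun hf0 => hL (tendsto_nhds_unique hf hf0)

namespace SingularSeq

variable {n : ℕ} {m : Fin n → ℂ} (S : SingularSeq n m)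

theorem eps_ne_zero (N : ℕ) : (S.eps N : ℂ) ≠ 0 :=
  Complex.ofReal_ne_zero.mpr (S.eps_pos N).ne'

theorem normalize' (N : ℕ) {i j : Fin n} (hij : i ≠ j) :
    S.delta N i j ^ 2 * (S.z N i - S.z N j) * (S.w N i - S.w N j) = 1 := by
  linear_combination S.normalize N i j hij

noncomputable def edge {i j : Fin n} (hij : i ≠ j) : ScaledEdge where
  u N := (S.eps N : ℂ) ^ 2 * Zq (S.delta N) (S.z N) i j
  v N := (S.eps N : ℂ) ^ 2 * Zq (S.delta N) (S.w N) i j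
  p N := (S.z N i - S.z N j) / S.eps N
  q N := (S.w N i - S.w N j) / S.eps N
  limU := (S.conv_Z i j hij).choose
  limV := (S.conv_W i j hij).choose
  u_eq N := normalized_pow_identity (S.eps_ne_zero N) (S.normalize' N hij)
  v_eq N := normalized_pow_identity (S.eps_ne_zero N) (by linear_combination S.normalize' N hij)
  pq_sq_mul_uv N := normalized_product_identity (S.eps_ne_zero N) (S.normalize' N hij)
  tendsto_u := (S.conv_Z i j hij).choose_spec
  tendsto_v := (S.conv_W i j hij).choose_spec

noncomputable def triangle {i j k : Fin n} (hij : i ≠ j) (hjk : j ≠ k) (hki : k ≠ i) :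
    ScaledTriangle where
  e₁ := S.edge hij
  e₂ := S.edge hjk
  e₃ := S.edge hki
  p_sum N := by simp only [edge]; ring
  q_sum N := by simp only [edge]; ring

end SingularSeq

theorem IsZWMatrices.add_eq_weight {n : ℕ} {m : Fin n → ℂ} {S : SingularSeq n m}
    {A B : Matrix (Fin n) (Fin n) ℕ} (hAB : IsZWMatrices S A B) {i j : Fin n} (hij : i ≠ j) :
    A i j + B i j = (S.edge hij).weight := by
  rw [ScaledEdge.weight,
    eq_ite_of_iff_not_tendsto_zero (hAB.zeroOne_A i j) (hAB.off_A i j hij) (S.edge hij).tendsto_u,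
    eq_ite_of_iff_not_tendsto_zero (hAB.zeroOne_B i j) (hAB.off_B i j hij) (S.edge hij).tendsto_v]

theorem third_rule_of_triangles_general (n : ℕ) (m : Fin n → ℂ)
    (S : SingularSeq n m) (A B : Matrix (Fin n) (Fin n) ℕ)
    (hAB : IsZWMatrices S A B) :
    ∀ i j k : Fin n, i < j → j < k →
      (A i j + B i j) + (A j k + B j k) + (A i k + B i k) ≠ 4 ∧
      (A i j + B i j) + (A j k + B j k) + (A i k + B i k) ≠ 5 := by
  intro i j k hij hjk
  have hik := hij.trans hjk
  rw [hAB.symm_A i k, hAB.symm_B i k, hAB.add_eq_weight hij.ne, hAB.add_eq_weight hjk.ne,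
    hAB.add_eq_weight hik.ne']
  exact (S.triangle hij.ne hjk.ne hik.ne').weight_sum_ne

theorem third_rule_of_triangles (n : ℕ) (hn : 3 ≤ n) (m : Fin n → ℂ)
    (hm : ∀ I : Finset (Fin n), I.Nonempty → ∑ k ∈ I, m k ≠ 0)
    (S : SingularSeq n m) (A B : Matrix (Fin n) (Fin n) ℕ)
    (hAB : IsZWMatrices S A B) :
    ∀ i j k : Fin n, i < j → j < k →
      (A i j + B i j) + (A j k + B j k) + (A i k + B i k) ≠ 4 ∧
      (A i j + B i j) + (A j k + B j k) + (A i k + B i k) ≠ 5 :=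
  third_rule_of_triangles_general n m S A B hAB
end
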